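/- arXiv:math/0607647 — 5 statements merged into one kernel-verified Lean document; each statement's English description precedes it below -/
import Mathlib

section
/- Let $d_1, d_2, d_3 \geq 2$ and let $\mathbf{x}_i, \mathbf{y}_i \in \mathbb{R}^{d_i}$ for $i=1,2,3$, with each pair $\{\mathbf{x}_i, \mathbf{y}_i\}$ linearly independent. Then the tensor $A = \mathbf{x}_1 \otimes \mathbf{x}_2 \otimes \mathbf{y}_3 + \mathbf{x}_1 \otimes \mathbf{y}_2 \otimes \mathbf{x}_3 + \mathbf{y}_1 \otimes \mathbf{x}_2 \otimes \mathbf{x}_3$ has tensor rank exactly 3. -/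
/-- For a linearly independent pair, there is a dual pair of linear functionals. -/
lemma exists_dual_pair {d : ℕ} (x y : Fin d → ℝ) (h : LinearIndependent ℝ ![x, y]) :
    ∃ f g : (Fin d → ℝ) →ₗ[ℝ] ℝ, f x = 1 ∧ f y = 0 ∧ g x = 0 ∧ g y = 1 := by
  have hxy : x ≠ y := by
    intro he
    have h01 : ![x, y] 0 = ![x, y] 1 := by simp [he]
    have := h.injective h01
    simp at this
  have hs : LinearIndepOn ℝ id (Set.range ![x, y]) :=
    (linearIndepOn_id_range_iff h.injective).mpr h
  have hxmem : x ∈ hs.extend (Set.subset_univ _) :=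
    hs.subset_extend _ ⟨0, rfl⟩
  have hymem : y ∈ hs.extend (Set.subset_univ _) :=
    hs.subset_extend _ ⟨1, rfl⟩
  set b := Module.Basis.extend hs with hb
  refine ⟨b.coord ⟨x, hxmem⟩, b.coord ⟨y, hymem⟩, ?_, ?_, ?_, ?_⟩
  · have hx : b ⟨x, hxmem⟩ = x := Module.Basis.extend_apply_self hs _
    have := congrArg (b.coord ⟨x, hxmem⟩) hx.symm
    rw [this, Module.Basis.coord_apply, Module.Basis.repr_self, Finsupp.single_apply]; simp
  · have hy : b ⟨y, hymem⟩ = y := Module.Basis.extend_apply_self hs _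
    have := congrArg (b.coord ⟨x, hxmem⟩) hy.symm
    rw [this, Module.Basis.coord_apply, Module.Basis.repr_self, Finsupp.single_apply]
    simp [Subtype.ext_iff, hxy.symm]
  · have hx : b ⟨x, hxmem⟩ = x := Module.Basis.extend_apply_self hs _
    have := congrArg (b.coord ⟨y, hymem⟩) hx.symm
    rw [this, Module.Basis.coord_apply, Module.Basis.repr_self, Finsupp.single_apply]
    simp [Subtype.ext_iff, hxy]
  · have hy : b ⟨y, hymem⟩ = y := Module.Basis.extend_apply_self hs _
    have := congrArg (b.coord ⟨y, hymem⟩) hy.symm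
    rw [this, Module.Basis.coord_apply, Module.Basis.repr_self, Finsupp.single_apply]; simp

lemma apply_sum_mul {d r : ℕ} (f : (Fin d → ℝ) →ₗ[ℝ] ℝ) (c : Fin r → ℝ)
    (v : Fin r → Fin d → ℝ) :
    f (fun k => ∑ t, c t * v t k) = ∑ t, c t * f (v t) := by
  have h1 : (fun k => ∑ t, c t * v t k) = ∑ t, c t • v t := by
    funext k
    simp [Finset.sum_apply]
  rw [h1, map_sum]
  simp

/-- Applying a triple of linear functionals to a sum of decomposable tensors. -/
lemma T_sum {d1 d2 d3 r : ℕ} (f : (Fin d1 → ℝ) →ₗ[ℝ] ℝ) (g : (Fin d2 → ℝ) →ₗ[ℝ] ℝ)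
    (h : (Fin d3 → ℝ) →ₗ[ℝ] ℝ) (u : Fin r → Fin d1 → ℝ) (v : Fin r → Fin d2 → ℝ)
    (w : Fin r → Fin d3 → ℝ) :
    f (fun i => g (fun j => h (fun k => ∑ t, u t i * v t j * w t k)))
      = ∑ t, f (u t) * g (v t) * h (w t) := by
  have s1 : ∀ i, (fun j => h (fun k => ∑ t, u t i * v t j * w t k))
      = fun j => ∑ t, (u t i * h (w t)) * v t j := by
    intro i; funext j
    have : (fun k => ∑ t, u t i * v t j * w t k)
        = fun k => ∑ t, (u t i * v t j) * w t k := by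
      funext k; exact Finset.sum_congr rfl fun t _ => by ring
    rw [this, apply_sum_mul h (fun t => u t i * v t j) w]
    exact Finset.sum_congr rfl fun t _ => by ring
  have s2 : (fun i => g (fun j => h (fun k => ∑ t, u t i * v t j * w t k)))
      = fun i => ∑ t, (g (v t) * h (w t)) * u t i := by
    funext i
    rw [s1 i, apply_sum_mul g (fun t => u t i * h (w t)) v]
    exact Finset.sum_congr rfl fun t _ => by ring
  rw [s2, apply_sum_mul f (fun t => g (v t) * h (w t)) u]
  exact Finset.sum_congr rfl fun t _ => by ring

/-- The purely algebraic core: the 2×2×2 W-tensor admits no 2-term decomposition. -/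
lemma wtensor_alg (a b a' b' c d c' d' e f e' f' : ℝ)
    (h000 : a*c*e + a'*c'*e' = 0) (h001 : a*c*f + a'*c'*f' = 1)
    (h010 : a*d*e + a'*d'*e' = 1) (h011 : a*d*f + a'*d'*f' = 0)
    (h100 : b*c*e + b'*c'*e' = 1) (h101 : b*c*f + b'*c'*f' = 0)
    (h110 : b*d*e + b'*d'*e' = 0) (h111 : b*d*f + b'*d'*f' = 0) : False := by
  set K := (a*b' - a'*b) * (c*d' - c'*d) with hK
  have E1 : e * e' * K = -1 := by
    linear_combination (b*d*e + b'*d'*e') * h000 - (a*d*e + a'*d'*e') * h100 - h010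
  have E2 : f * f' * K = 0 := by
    linear_combination (a*c*f + a'*c'*f') * h111 - (b*c*f + b'*c'*f') * h011
  have E3 : (e*f' + f*e') * K = 0 := by
    linear_combination (a*c*e + a'*c'*e') * h111 + (a*c*f + a'*c'*f') * h110
      - (a*d*e + a'*d'*e') * h101 - (a*d*f + a'*d'*f') * h100 - h011
  have hK0 : K ≠ 0 := by intro h; rw [h] at E1; norm_num at E1
  have he : e ≠ 0 := by intro h; rw [h] at E1; norm_num at E1
  have he' : e' ≠ 0 := by intro h; rw [h] at E1; norm_num at E1
  have hff' : f * f' = 0 := by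
    rcases mul_eq_zero.mp E2 with h | h
    · exact h
    · exact absurd h hK0
  rcases mul_eq_zero.mp hff' with hf | hf'
  · have : e * f' * K = 0 := by rw [← E3]; ring_nf; rw [hf]; ring
    have hf' : f' = 0 := by
      rcases mul_eq_zero.mp this with h | h
      · rcases mul_eq_zero.mp h with h | h
        · exact absurd h he
        · exact h
      · exact absurd h hK0
    rw [hf, hf'] at h001; norm_num at h001
  · have : f * e' * K = 0 := by rw [← E3]; ring_nf; rw [hf']; ring
    have hf : f = 0 := by
      rcases mul_eq_zero.mp this with h | h
      · rcases mul_eq_zero.mp h with h | h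
        · exact h
        · exact absurd h he'
      · exact absurd h hK0
    rw [hf, hf'] at h001; norm_num at h001

/-- No 2-term decomposition of the tensor `x₁⊗x₂⊗y₃ + x₁⊗y₂⊗x₃ + y₁⊗x₂⊗x₃`. -/
lemma reduce_to_W {d1 d2 d3 : ℕ}
    (x1 y1 : Fin d1 → ℝ) (x2 y2 : Fin d2 → ℝ) (x3 y3 : Fin d3 → ℝ)
    (hi1 : LinearIndependent ℝ ![x1, y1])
    (hi2 : LinearIndependent ℝ ![x2, y2])
    (hi3 : LinearIndependent ℝ ![x3, y3])
    (u : Fin 2 → Fin d1 → ℝ) (v : Fin 2 → Fin d2 → ℝ) (w : Fin 2 → Fin d3 → ℝ)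
    (h : ∀ i j k, x1 i * x2 j * y3 k + x1 i * y2 j * x3 k + y1 i * x2 j * x3 k
      = ∑ t : Fin 2, u t i * v t j * w t k) : False := by
  obtain ⟨f1, g1, hf1x, hf1y, hg1x, hg1y⟩ := exists_dual_pair x1 y1 hi1
  obtain ⟨f2, g2, hf2x, hf2y, hg2x, hg2y⟩ := exists_dual_pair x2 y2 hi2
  obtain ⟨f3, g3, hf3x, hf3y, hg3x, hg3y⟩ := exists_dual_pair x3 y3 hi3
  have main : ∀ (F : (Fin d1 → ℝ) →ₗ[ℝ] ℝ) (G : (Fin d2 → ℝ) →ₗ[ℝ] ℝ)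
      (H : (Fin d3 → ℝ) →ₗ[ℝ] ℝ),
      F (u 0) * G (v 0) * H (w 0) + F (u 1) * G (v 1) * H (w 1)
        = F x1 * G x2 * H y3 + F x1 * G y2 * H x3 + F y1 * G x2 * H x3 := by
    intro F G H
    have step : (fun i => G (fun j => H (fun k => ∑ t : Fin 2, u t i * v t j * w t k)))
        = (fun i => G (fun j => H (fun k =>
            ∑ t : Fin 3, ![x1, x1, y1] t i * ![x2, y2, x2] t j * ![y3, x3, x3] t k))) := by
      funext i
      congr 1
      funext j
      congr 1
      funext k
      rw [← h i j k, Fin.sum_univ_three]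
      simp only [Matrix.cons_val_zero, Matrix.cons_val_one, Matrix.head_cons,
        Matrix.cons_val_two, Matrix.tail_cons]
    have e1 := T_sum F G H u v w
    have e2 := T_sum F G H ![x1, x1, y1] ![x2, y2, x2] ![y3, x3, x3]
    rw [step] at e1
    rw [e2] at e1
    rw [← Fin.sum_univ_two (fun t => F (u t) * G (v t) * H (w t)), ← e1,
      Fin.sum_univ_three]
    simp only [Matrix.cons_val_zero, Matrix.cons_val_one, Matrix.head_cons,
      Matrix.cons_val_two, Matrix.tail_cons]
  have h000 := main f1 f2 f3
  rw [hf1x, hf1y, hf2x, hf2y, hf3x, hf3y] at h000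
  have h001 := main f1 f2 g3
  rw [hf1x, hf1y, hf2x, hf2y, hg3x, hg3y] at h001
  have h010 := main f1 g2 f3
  rw [hf1x, hf1y, hg2x, hg2y, hf3x, hf3y] at h010
  have h011 := main f1 g2 g3
  rw [hf1x, hf1y, hg2x, hg2y, hg3x, hg3y] at h011
  have h100 := main g1 f2 f3
  rw [hg1x, hg1y, hf2x, hf2y, hf3x, hf3y] at h100
  have h101 := main g1 f2 g3
  rw [hg1x, hg1y, hf2x, hf2y, hg3x, hg3y] at h101
  have h110 := main g1 g2 f3
  rw [hg1x, hg1y, hg2x, hg2y, hf3x, hf3y] at h110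
  have h111 := main g1 g2 g3
  rw [hg1x, hg1y, hg2x, hg2y, hg3x, hg3y] at h111
  exact wtensor_alg (f1 (u 0)) (g1 (u 0)) (f1 (u 1)) (g1 (u 1))
    (f2 (v 0)) (g2 (v 0)) (f2 (v 1)) (g2 (v 1))
    (f3 (w 0)) (g3 (w 0)) (f3 (w 1)) (g3 (w 1))
    (by linarith) (by linarith) (by linarith) (by linarith)
    (by linarith) (by linarith) (by linarith) (by linarith)

/-- Any decomposition with at most two terms can be padded to exactly two terms. -/
lemma pad_two {d1 d2 d3 m : ℕ} (hm : m ≤ 2) (A : Fin d1 → Fin d2 → Fin d3 → ℝ)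
    (u : Fin m → Fin d1 → ℝ) (v : Fin m → Fin d2 → ℝ) (w : Fin m → Fin d3 → ℝ)
    (h : ∀ i j k, A i j k = ∑ t, u t i * v t j * w t k) :
    ∃ (u' : Fin 2 → Fin d1 → ℝ) (v' : Fin 2 → Fin d2 → ℝ) (w' : Fin 2 → Fin d3 → ℝ),
      ∀ i j k, A i j k = ∑ t, u' t i * v' t j * w' t k := by
  refine ⟨fun t i => if h : (t : ℕ) < m then u ⟨t, h⟩ i else 0,
    fun t j => if h : (t : ℕ) < m then v ⟨t, h⟩ j else 0,
    fun t k => if h : (t : ℕ) < m then w ⟨t, h⟩ k else 0, ?_⟩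
  intro i j k
  rw [h i j k]
  interval_cases m <;>
    simp [Fin.sum_univ_two, Fin.sum_univ_one, Fin.sum_univ_zero, Fin.isValue]

/-- Tensor rank of an order-3 tensor: minimal number of decomposable tensors summing to it. -/
noncomputable def tensorRank3 {d1 d2 d3 : ℕ} (A : Fin d1 → Fin d2 → Fin d3 → ℝ) : ℕ :=
  sInf { r : ℕ | ∃ (u : Fin r → Fin d1 → ℝ) (v : Fin r → Fin d2 → ℝ) (w : Fin r → Fin d3 → ℝ),
    ∀ i j k, A i j k = ∑ t, u t i * v t j * w t k }

/-- If each pair `{xᵢ, yᵢ}` is linearly independent, the tensor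
`x₁⊗x₂⊗y₃ + x₁⊗y₂⊗x₃ + y₁⊗x₂⊗x₃` has tensor rank exactly 3. -/
theorem tensorRank3_dSL {d1 d2 d3 : ℕ} (h1 : 2 ≤ d1) (h2 : 2 ≤ d2) (h3 : 2 ≤ d3)
    (x1 y1 : Fin d1 → ℝ) (x2 y2 : Fin d2 → ℝ) (x3 y3 : Fin d3 → ℝ)
    (hi1 : LinearIndependent ℝ ![x1, y1])
    (hi2 : LinearIndependent ℝ ![x2, y2])
    (hi3 : LinearIndependent ℝ ![x3, y3]) :
    tensorRank3 (fun i j k => x1 i * x2 j * y3 k + x1 i * y2 j * x3 k + y1 i * x2 j * x3 k)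
      = 3 := by
  unfold tensorRank3
  have hmem : 3 ∈ { r : ℕ | ∃ (u : Fin r → Fin d1 → ℝ) (v : Fin r → Fin d2 → ℝ)
      (w : Fin r → Fin d3 → ℝ), ∀ i j k,
      x1 i * x2 j * y3 k + x1 i * y2 j * x3 k + y1 i * x2 j * x3 k
        = ∑ t, u t i * v t j * w t k } := by
    refine ⟨![x1, x1, y1], ![x2, y2, x2], ![y3, x3, x3], fun i j k => ?_⟩
    rw [Fin.sum_univ_three]
    simp only [Matrix.cons_val_zero, Matrix.cons_val_one, Matrix.head_cons,
      Matrix.cons_val_two, Matrix.tail_cons]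
  refine le_antisymm (Nat.sInf_le hmem) (le_csInf ⟨3, hmem⟩ ?_)
  rintro m ⟨u, v, w, hm⟩
  by_contra hlt
  push_neg at hlt
  have hm2 : m ≤ 2 := by omega
  obtain ⟨u', v', w', h2⟩ := pad_two hm2 _ u v w hm
  exact reduce_to_W x1 y1 x2 y2 x3 y3 hi1 hi2 hi3 u' v' w' fun i j k => h2 i j k
end

section
/- Let $\mathbf{x}_i, \mathbf{y}_i \in \mathbb{R}^{d_i}$ ($i=1,2,3$) with each pair $\{\mathbf{x}_i, \mathbf{y}_i\}$ linearly independent, and set $A = \mathbf{x}_1 \otimes \mathbf{x}_2 \otimes \mathbf{y}_3 + \mathbf{x}_1 \otimes \mathbf{y}_2 \otimes \mathbf{x}_3 + \mathbf{y}_1 \otimes \mathbf{x}_2 \otimes \mathbf{x}_3$. Define $A_n = n(\mathbf{x}_1 + \tfrac{1}{n}\mathbf{y}_1)\otimes(\mathbf{x}_2 + \tfrac{1}{n}\mathbf{y}_2)\otimes(\mathbf{x}_3 + \tfrac{1}{n}\mathbf{y}_3) - n\,\mathbf{x}_1\otimes\mathbf{x}_2\otimes\mathbf{x}_3$. Then each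 $A_n$ has tensor rank at most 2 and $A_n \to A$ in Frobenius norm. In particular, $A$ has rank 3 but is a limit of rank-2 tensors, so $A$ has no best rank-2 approximation. -/
/-- Frobenius norm of an order-3 tensor. -/
noncomputable def frobNorm3 {d1 d2 d3 : ℕ} (A : Fin d1 → Fin d2 → Fin d3 → ℝ) : ℝ :=
  Real.sqrt (∑ i, ∑ j, ∑ k, (A i j k) ^ 2)


open Finset Filter

lemma exists_dual {d : ℕ} {x y : Fin d → ℝ} (h : LinearIndependent ℝ ![x, y]) :
    ∃ f g : (Fin d → ℝ) →ₗ[ℝ] ℝ, f x = 1 ∧ f y = 0 ∧ g x = 0 ∧ g y = 1 := by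
  set T : (Fin 2 → ℝ) →ₗ[ℝ] (Fin d → ℝ) :=
    LinearMap.smulRight (LinearMap.proj 0) x + LinearMap.smulRight (LinearMap.proj 1) y with hT
  have hker : LinearMap.ker T = ⊥ := by
    rw [LinearMap.ker_eq_bot']
    intro c hc
    have h2 := Fintype.linearIndependent_iff.mp h c ?_
    · funext i
      fin_cases i <;> simpa using h2 _
    · have : c 0 • x + c 1 • y = 0 := by simpa [hT] using hc
      simpa [Fin.sum_univ_two] using this
  obtain ⟨g, hg⟩ := T.exists_leftInverse_of_injective hker
  have hx : T ![1, 0] = x := by simp [hT]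
  have hy : T ![0, 1] = y := by simp [hT]
  refine ⟨(LinearMap.proj 0).comp g, (LinearMap.proj 1).comp g, ?_, ?_, ?_, ?_⟩ <;>
    simp [← hx, ← hy, ← LinearMap.comp_apply g T, hg]

lemma contract_sum {d1 d2 d3 r : ℕ} (f1 : (Fin d1 → ℝ) →ₗ[ℝ] ℝ) (f2 : (Fin d2 → ℝ) →ₗ[ℝ] ℝ)
    (f3 : (Fin d3 → ℝ) →ₗ[ℝ] ℝ) (u : Fin r → Fin d1 → ℝ) (v : Fin r → Fin d2 → ℝ)
    (w : Fin r → Fin d3 → ℝ) :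
    f1 (fun i => f2 (fun j => f3 (fun k => ∑ t, u t i * v t j * w t k))) =
      ∑ t, f1 (u t) * f2 (v t) * f3 (w t) := by
  have s3 : ∀ i j, f3 (fun k => ∑ t, u t i * v t j * w t k) = ∑ t, u t i * v t j * f3 (w t) := by
    intro i j
    rw [show (fun k => ∑ t, u t i * v t j * w t k) = ∑ t, (u t i * v t j) • w t by
      funext k; simp [Finset.sum_apply]]
    simp [map_sum]
  simp only [s3]
  have s2 : ∀ i, f2 (fun j => ∑ t, u t i * v t j * f3 (w t)) =
      ∑ t, u t i * f2 (v t) * f3 (w t) := by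
    intro i
    rw [show (fun j => ∑ t, u t i * v t j * f3 (w t)) = ∑ t, (u t i * f3 (w t)) • v t by
      funext j; simp [Finset.sum_apply]; apply Finset.sum_congr rfl; intros; ring]
    rw [map_sum]
    apply Finset.sum_congr rfl; intros; simp; ring
  simp only [s2]
  rw [show (fun i => ∑ t, u t i * f2 (v t) * f3 (w t)) = ∑ t, (f2 (v t) * f3 (w t)) • u t by
    funext i; simp [Finset.sum_apply]; apply Finset.sum_congr rfl; intros; ring]
  rw [map_sum]
  apply Finset.sum_congr rfl; intros; simp; ring

lemma no_rank_two {d1 d2 d3 : ℕ} {x1 y1 : Fin d1 → ℝ} {x2 y2 : Fin d2 → ℝ} {x3 y3 : Fin d3 → ℝ}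
    (hi1 : LinearIndependent ℝ ![x1, y1]) (hi2 : LinearIndependent ℝ ![x2, y2])
    (hi3 : LinearIndependent ℝ ![x3, y3])
    {r : ℕ} (hr : r ≤ 2) (u : Fin r → Fin d1 → ℝ) (v : Fin r → Fin d2 → ℝ)
    (w : Fin r → Fin d3 → ℝ)
    (h : ∀ i j k, x1 i * x2 j * y3 k + x1 i * y2 j * x3 k + y1 i * x2 j * x3 k
        = ∑ t, u t i * v t j * w t k) : False := by
  obtain ⟨α, β, hα1, hα2, hβ1, hβ2⟩ := exists_dual hi1
  obtain ⟨γ, δ, hγ1, hγ2, hδ1, hδ2⟩ := exists_dual hi2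
  obtain ⟨φ, ψ, hφ1, hφ2, hψ1, hψ2⟩ := exists_dual hi3
  have h3 : ∀ i j k, ∑ t : Fin 3, (![x1,x1,y1]) t i * (![x2,y2,x2]) t j * (![y3,x3,x3]) t k
      = ∑ t, u t i * v t j * w t k := by
    intro i j k
    rw [Fin.sum_univ_three]
    simpa using h i j k
  have key : ∀ (f1 : (Fin d1 → ℝ) →ₗ[ℝ] ℝ) (f2 : (Fin d2 → ℝ) →ₗ[ℝ] ℝ)
      (f3 : (Fin d3 → ℝ) →ₗ[ℝ] ℝ),
      f1 x1 * f2 x2 * f3 y3 + f1 x1 * f2 y2 * f3 x3 + f1 y1 * f2 x2 * f3 x3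
        = ∑ t, f1 (u t) * f2 (v t) * f3 (w t) := by
    intro f1 f2 f3
    have e1 := contract_sum f1 f2 f3 (![x1,x1,y1]) (![x2,y2,x2]) (![y3,x3,x3])
    have e2 := contract_sum f1 f2 f3 u v w
    simp only [h3] at e1
    rw [e2] at e1
    rw [e1, Fin.sum_univ_three]
    simp
  have n11 := key α γ φ; have n12 := key α δ φ; have n21 := key β γ φ; have n22 := key β δ φ
  have m11 := key α γ ψ; have m12 := key α δ ψ; have m21 := key β γ ψ; have m22 := key β δ ψ
  rw [hα1, hα2, hγ1, hγ2, hφ1, hφ2] at n11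
  rw [hα1, hα2, hδ1, hδ2, hφ1, hφ2] at n12
  rw [hβ1, hβ2, hγ1, hγ2, hφ1, hφ2] at n21
  rw [hβ1, hβ2, hδ1, hδ2, hφ1, hφ2] at n22
  rw [hα1, hα2, hγ1, hγ2, hψ1, hψ2] at m11
  rw [hα1, hα2, hδ1, hδ2, hψ1, hψ2] at m12
  rw [hβ1, hβ2, hγ1, hγ2, hψ1, hψ2] at m21
  rw [hβ1, hβ2, hδ1, hδ2, hψ1, hψ2] at m22
  norm_num at n11 n12 n21 n22 m11 m12 m21 m22
  interval_cases r
  · simp at n12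
  · simp only [Fin.sum_univ_one] at n11 n12 n21 n22 m11 m12 m21 m22
    nlinarith [n11, n12, n21, n22]
  · simp only [Fin.sum_univ_two] at n11 n12 n21 n22 m11 m12 m21 m22
    set p0 := α (u 0); set p1 := α (u 1); set q0 := β (u 0); set q1 := β (u 1)
    set r0 := γ (v 0); set r1 := γ (v 1); set s0 := δ (v 0); set s1 := δ (v 1)
    set a0 := φ (w 0); set a1 := φ (w 1); set b0 := ψ (w 0); set b1 := ψ (w 1)
    set P := p0 * q1 - p1 * q0 with hP
    set Q := r0 * s1 - r1 * s0 with hQ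
    have hAk : a0 * a1 * (P * Q) = -1 := by
      have e : a0 * a1 * (P * Q) =
          (p0 * r0 * a0 + p1 * r1 * a1) * (q0 * s0 * a0 + q1 * s1 * a1)
          - (p0 * s0 * a0 + p1 * s1 * a1) * (q0 * r0 * a0 + q1 * r1 * a1) := by
        rw [hP, hQ]; ring
      rw [e, ← n11, ← n12, ← n21, ← n22]; ring
    have hBk : b0 * b1 * (P * Q) = 0 := by
      have e : b0 * b1 * (P * Q) =
          (p0 * r0 * b0 + p1 * r1 * b1) * (q0 * s0 * b0 + q1 * s1 * b1)
          - (p0 * s0 * b0 + p1 * s1 * b1) * (q0 * r0 * b0 + q1 * r1 * b1) := by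
        rw [hP, hQ]; ring
      rw [e, ← m11, ← m12, ← m21, ← m22]; ring
    have hCk : (a0 + b0) * (a1 + b1) * (P * Q) = -1 := by
      have e : (a0 + b0) * (a1 + b1) * (P * Q) =
          ((p0 * r0 * a0 + p1 * r1 * a1) + (p0 * r0 * b0 + p1 * r1 * b1)) *
            ((q0 * s0 * a0 + q1 * s1 * a1) + (q0 * s0 * b0 + q1 * s1 * b1))
          - ((p0 * s0 * a0 + p1 * s1 * a1) + (p0 * s0 * b0 + p1 * s1 * b1)) *
            ((q0 * r0 * a0 + q1 * r1 * a1) + (q0 * r0 * b0 + q1 * r1 * b1)) := by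
        rw [hP, hQ]; ring
      rw [e, ← n11, ← n12, ← n21, ← n22, ← m11, ← m12, ← m21, ← m22]; ring
    have hD : (a0 * b1 + a1 * b0) * (P * Q) = 0 := by linear_combination hCk - hAk - hBk
    have hKne : P * Q ≠ 0 := by intro h0; rw [h0] at hAk; norm_num at hAk
    have ha0 : a0 ≠ 0 := by intro h0; rw [h0] at hAk; norm_num at hAk
    have ha1 : a1 ≠ 0 := by intro h0; rw [h0] at hAk; norm_num at hAk
    have hbb : b0 * b1 = 0 := by
      rcases mul_eq_zero.mp hBk with h0 | h0
      · exact h0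
      · exact absurd h0 hKne
    have hb0b1 : b0 = 0 ∧ b1 = 0 := by
      rcases mul_eq_zero.mp hbb with h0 | h0
      · refine ⟨h0, ?_⟩
        have : a0 * b1 * (P * Q) = 0 := by rw [h0] at hD; linear_combination hD
        rcases mul_eq_zero.mp this with h1 | h1
        · rcases mul_eq_zero.mp h1 with h2 | h2
          · exact absurd h2 ha0
          · exact h2
        · exact absurd h1 hKne
      · refine ⟨?_, h0⟩
        have : a1 * b0 * (P * Q) = 0 := by rw [h0] at hD; linear_combination hD
        rcases mul_eq_zero.mp this with h1 | h1
        · rcases mul_eq_zero.mp h1 with h2 | h2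
          · exact absurd h2 ha1
          · exact h2
        · exact absurd h1 hKne
    rw [hb0b1.1, hb0b1.2] at m11
    norm_num at m11

/-- The tensor `A = x₁⊗x₂⊗y₃ + x₁⊗y₂⊗x₃ + y₁⊗x₂⊗x₃` (with each pair `{xᵢ,yᵢ}` linearly
independent) has rank 3, yet the rank-≤2 tensors
`Aₙ = n(x₁+yₙ/n)⊗(x₂+y₂/n)⊗(x₃+y₃/n) − n x₁⊗x₂⊗x₃` converge to it in Frobenius norm;
hence `A` has no best rank-2 approximation. -/
theorem dSL_approximation {d1 d2 d3 : ℕ}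
    (x1 y1 : Fin d1 → ℝ) (x2 y2 : Fin d2 → ℝ) (x3 y3 : Fin d3 → ℝ)
    (hi1 : LinearIndependent ℝ ![x1, y1])
    (hi2 : LinearIndependent ℝ ![x2, y2])
    (hi3 : LinearIndependent ℝ ![x3, y3])
    (A : Fin d1 → Fin d2 → Fin d3 → ℝ)
    (hA : A = fun i j k => x1 i * x2 j * y3 k + x1 i * y2 j * x3 k + y1 i * x2 j * x3 k)
    (Aseq : ℕ → Fin d1 → Fin d2 → Fin d3 → ℝ)
    (hAseq : ∀ n : ℕ, Aseq n = fun i j k =>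
      (n : ℝ) * ((x1 i + (1 / (n : ℝ)) * y1 i) * (x2 j + (1 / (n : ℝ)) * y2 j) *
        (x3 k + (1 / (n : ℝ)) * y3 k)) - (n : ℝ) * (x1 i * x2 j * x3 k)) :
    (∀ n : ℕ, tensorRank3 (Aseq n) ≤ 2) ∧
    Filter.Tendsto (fun n : ℕ => frobNorm3 (fun i j k => Aseq n i j k - A i j k))
      Filter.atTop (nhds 0) ∧
    tensorRank3 A = 3 ∧
    ¬ ∃ B : Fin d1 → Fin d2 → Fin d3 → ℝ, tensorRank3 B ≤ 2 ∧
        ∀ C : Fin d1 → Fin d2 → Fin d3 → ℝ, tensorRank3 C ≤ 2 →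
          frobNorm3 (fun i j k => A i j k - B i j k) ≤
          frobNorm3 (fun i j k => A i j k - C i j k) := by
  have hrank2 : ∀ n : ℕ, tensorRank3 (Aseq n) ≤ 2 := by
    intro n
    apply Nat.sInf_le
    refine ⟨![fun i => (n:ℝ) * (x1 i + (1/(n:ℝ)) * y1 i), fun i => -((n:ℝ) * x1 i)],
      ![fun j => x2 j + (1/(n:ℝ)) * y2 j, x2],
      ![fun k => x3 k + (1/(n:ℝ)) * y3 k, x3], ?_⟩
    intro i j k
    rw [hAseq]
    simp [Fin.sum_univ_two]
    ring
  have hconv : Filter.Tendsto (fun n : ℕ => frobNorm3 (fun i j k => Aseq n i j k - A i j k))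
      Filter.atTop (nhds 0) := by
    have hdiff : ∀ i j k, Tendsto (fun n : ℕ => Aseq n i j k - A i j k) atTop (nhds 0) := by
      intro i j k
      have hg : Tendsto (fun n : ℕ =>
          (1/(n:ℝ)) * (x1 i * y2 j * y3 k + y1 i * x2 j * y3 k + y1 i * y2 j * x3 k)
          + (1/(n:ℝ))^2 * (y1 i * y2 j * y3 k)) atTop (nhds 0) := by
        have h1 := tendsto_one_div_atTop_nhds_zero_nat (𝕜 := ℝ)
        have := (h1.mul_const (x1 i * y2 j * y3 k + y1 i * x2 j * y3 k + y1 i * y2 j * x3 k)).add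
          ((h1.pow 2).mul_const (y1 i * y2 j * y3 k))
        simpa using this
      refine hg.congr' ?_
      filter_upwards [eventually_ge_atTop 1] with n hn
      have hn0 : (n:ℝ) ≠ 0 := by positivity
      rw [hAseq, hA]
      field_simp
      ring
    have hsum : Tendsto (fun n : ℕ => ∑ i, ∑ j, ∑ k, (Aseq n i j k - A i j k)^2)
        atTop (nhds 0) := by
      have : Tendsto (fun n : ℕ => ∑ i, ∑ j, ∑ k, (Aseq n i j k - A i j k)^2)
          atTop (nhds (∑ _i : Fin d1, ∑ _j : Fin d2, ∑ _k : Fin d3, (0:ℝ))) := by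
        apply tendsto_finset_sum; intro i _
        apply tendsto_finset_sum; intro j _
        apply tendsto_finset_sum; intro k _
        simpa using (hdiff i j k).pow 2
      simpa using this
    have := (Real.continuous_sqrt.tendsto 0).comp hsum
    simpa [frobNorm3, Function.comp_def] using this
  have mem3 : (3 : ℕ) ∈ { r : ℕ | ∃ (u : Fin r → Fin d1 → ℝ) (v : Fin r → Fin d2 → ℝ)
      (w : Fin r → Fin d3 → ℝ), ∀ i j k, A i j k = ∑ t, u t i * v t j * w t k } := by
    refine ⟨![x1, x1, y1], ![x2, y2, x2], ![y3, x3, x3], ?_⟩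
    intro i j k
    rw [hA, Fin.sum_univ_three]
    simp only [Matrix.cons_val_zero, Matrix.cons_val_one, Matrix.head_cons,
      Matrix.cons_val_two, Matrix.tail_cons]
  have hlow : ∀ m ∈ { r : ℕ | ∃ (u : Fin r → Fin d1 → ℝ) (v : Fin r → Fin d2 → ℝ)
      (w : Fin r → Fin d3 → ℝ), ∀ i j k, A i j k = ∑ t, u t i * v t j * w t k }, 3 ≤ m := by
    intro m hm
    by_contra hlt
    push_neg at hlt
    obtain ⟨u, v, w, hm⟩ := hm
    refine no_rank_two hi1 hi2 hi3 (Nat.lt_succ_iff.mp hlt) u v w ?_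
    intro i j k
    rw [← hm i j k, hA]
  have hrank3 : tensorRank3 A = 3 :=
    le_antisymm (Nat.sInf_le mem3) (le_csInf ⟨3, mem3⟩ hlow)
  refine ⟨hrank2, hconv, hrank3, ?_⟩
  rintro ⟨B, hB2, hBopt⟩
  have hub : ∀ n : ℕ, frobNorm3 (fun i j k => A i j k - B i j k) ≤
      frobNorm3 (fun i j k => Aseq n i j k - A i j k) := by
    intro n
    have := hBopt (Aseq n) (hrank2 n)
    have heq : frobNorm3 (fun i j k => A i j k - Aseq n i j k) =
        frobNorm3 (fun i j k => Aseq n i j k - A i j k) := by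
      unfold frobNorm3
      congr 1
      apply Finset.sum_congr rfl; intro i _
      apply Finset.sum_congr rfl; intro j _
      apply Finset.sum_congr rfl; intro k _
      ring
    rw [← heq]
    exact this
  have hle0 : frobNorm3 (fun i j k => A i j k - B i j k) ≤ 0 :=
    ge_of_tendsto' hconv hub
  have hfz : frobNorm3 (fun i j k => A i j k - B i j k) = 0 :=
    le_antisymm hle0 (Real.sqrt_nonneg _)
  have hsz : (∑ i, ∑ j, ∑ k, (A i j k - B i j k) ^ 2) = 0 := by
    have hnn : (0:ℝ) ≤ ∑ i, ∑ j, ∑ k, (A i j k - B i j k) ^ 2 := by positivity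
    unfold frobNorm3 at hfz
    nlinarith [Real.sq_sqrt hnn]
  have hAB : A = B := by
    funext i j k
    have h1 : ∀ i ∈ Finset.univ, (0:ℝ) ≤ ∑ j, ∑ k, (A i j k - B i j k) ^ 2 := by
      intros; positivity
    have h2 := (Finset.sum_eq_zero_iff_of_nonneg h1).mp hsz i (Finset.mem_univ i)
    have h3 : ∀ j ∈ Finset.univ, (0:ℝ) ≤ ∑ k, (A i j k - B i j k) ^ 2 := by
      intros; positivity
    have h4 := (Finset.sum_eq_zero_iff_of_nonneg h3).mp h2 j (Finset.mem_univ j)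
    have h5 : ∀ k ∈ Finset.univ, (0:ℝ) ≤ (A i j k - B i j k) ^ 2 := by
      intros; positivity
    have h6 := (Finset.sum_eq_zero_iff_of_nonneg h5).mp h4 k (Finset.mem_univ k)
    have := pow_eq_zero_iff (n := 2) (by norm_num) |>.mp h6
    linarith [sub_eq_zero.mp this]
  rw [← hAB] at hB2
  rw [hrank3] at hB2
  norm_num at hB2
end

section
/- Suppose $A_n \to A$ in $\mathbb{R}^{d_1 \times d_2 \times d_3}$, where $\mathrm{rank}_\otimes(A) \geq r+1$ and each $A_n = \sum_{i=1}^r \lambda_{i,n}\,\mathbf{u}_{i,n}\otimes\mathbf{v}_{i,n}\otimes\mathbf{w}_{i,n}$ with unit vectors $\mathbf{u}_{i,n}, \mathbf{v}_{i,n}, \mathbf{w}_{i,n}$ and real coefficients $\lambda_{i,n}$. Then $\max_i |\lambda_{i,n}| \to \infty$ as $n \to \infty$, and at least two of the coefficient sequences $(\lambda_{i,n})_n$ are unbounded. -/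
open Filter Topology

lemma entry_le_frob {d1 d2 d3 : ℕ} (B : Fin d1 → Fin d2 → Fin d3 → ℝ)
    (i : Fin d1) (j : Fin d2) (k : Fin d3) : |B i j k| ≤ frobNorm3 B := by
  rw [frobNorm3, ← Real.sqrt_sq_eq_abs]
  apply Real.sqrt_le_sqrt
  calc (B i j k) ^ 2 ≤ ∑ k', (B i j k') ^ 2 :=
        Finset.single_le_sum (f := fun k' => (B i j k') ^ 2) (fun _ _ => sq_nonneg _) (Finset.mem_univ k)
    _ ≤ ∑ j', ∑ k', (B i j' k') ^ 2 :=
        Finset.single_le_sum (f := fun j' => ∑ k', (B i j' k') ^ 2)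
          (fun _ _ => Finset.sum_nonneg fun _ _ => sq_nonneg _) (Finset.mem_univ j)
    _ ≤ ∑ i', ∑ j', ∑ k', (B i' j' k') ^ 2 :=
        Finset.single_le_sum (f := fun i' => ∑ j', ∑ k', (B i' j' k') ^ 2)
          (fun _ _ => Finset.sum_nonneg fun _ _ => Finset.sum_nonneg fun _ _ => sq_nonneg _)
          (Finset.mem_univ i)

lemma abs_le_one_of_sum_sq {d : ℕ} (x : Fin d → ℝ) (h : ∑ i, x i ^ 2 = 1) (i : Fin d) :
    |x i| ≤ 1 := by
  have h1 : x i ^ 2 ≤ 1 := by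
    rw [← h]; exact Finset.single_le_sum (f := fun j => x j ^ 2) (fun _ _ => sq_nonneg _) (Finset.mem_univ i)
  have := Real.sqrt_le_sqrt h1
  rwa [Real.sqrt_sq_eq_abs, Real.sqrt_one] at this

lemma rank_le_of_bounded {d1 d2 d3 r : ℕ}
    (A : Fin d1 → Fin d2 → Fin d3 → ℝ)
    (lam : Fin r → ℕ → ℝ)
    (u : Fin r → ℕ → Fin d1 → ℝ) (v : Fin r → ℕ → Fin d2 → ℝ) (w : Fin r → ℕ → Fin d3 → ℝ)
    (hu : ∀ i n, ∑ x, (u i n x) ^ 2 = 1)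
    (hv : ∀ i n, ∑ x, (v i n x) ^ 2 = 1)
    (hw : ∀ i n, ∑ x, (w i n x) ^ 2 = 1)
    (hAe : ∀ i j k, Tendsto (fun n => ∑ t, lam t n * (u t n i * v t n j * w t n k))
      atTop (𝓝 (A i j k)))
    (g : ℕ → ℕ) (hg : Tendsto g atTop atTop)
    (M : ℝ) (hM : ∀ t n, |lam t (g n)| ≤ M) :
    tensorRank3 A ≤ r := by
  set C : ℝ := |M| + 1 with hC
  have hC1 : (1:ℝ) ≤ C := by have := abs_nonneg M; linarith
  have hCM : M ≤ C := by
    have := le_abs_self M; linarith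
  set E := Fin r → ℝ × (Fin d1 → ℝ) × (Fin d2 → ℝ) × (Fin d3 → ℝ) with hE
  set lo : E := fun _ => (-C, fun _ => -C, fun _ => -C, fun _ => -C) with hlo
  set hi : E := fun _ => (C, fun _ => C, fun _ => C, fun _ => C) with hhi
  set x : ℕ → E := fun n t => (lam t (g n), u t (g n), v t (g n), w t (g n)) with hx
  have hmem : ∀ n, x n ∈ Set.Icc lo hi := by
    intro n
    constructor <;> intro t <;>
      refine ⟨?_, ?_, ?_, ?_⟩ <;>
        first
        | (intro z
           first
           | (have := abs_le.mp ((abs_le_one_of_sum_sq _ (hu t (g n)) z).trans hC1); simp [hx, hlo, hhi]; linarith [this.1, this.2])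
           | (have := abs_le.mp ((abs_le_one_of_sum_sq _ (hv t (g n)) z).trans hC1); simp [hx, hlo, hhi]; linarith [this.1, this.2])
           | (have := abs_le.mp ((abs_le_one_of_sum_sq _ (hw t (g n)) z).trans hC1); simp [hx, hlo, hhi]; linarith [this.1, this.2]))
        | (have := abs_le.mp ((hM t n).trans hCM); simp [hx, hlo, hhi]; linarith [this.1, this.2])
  obtain ⟨a, -, φ, hφ, hcv⟩ := isCompact_Icc.tendsto_subseq hmem
  have hcomp : ∀ t, Tendsto (fun n => x (φ n) t) atTop (𝓝 (a t)) :=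
    fun t => ((continuous_apply t).tendsto a).comp hcv
  have hlam : ∀ t, Tendsto (fun n => lam t (g (φ n))) atTop (𝓝 (a t).1) :=
    fun t => (continuous_fst.tendsto _).comp (hcomp t)
  have hU : ∀ t i, Tendsto (fun n => u t (g (φ n)) i) atTop (𝓝 ((a t).2.1 i)) :=
    fun t i => ((continuous_apply i).tendsto _).comp
      ((continuous_fst.tendsto _).comp ((continuous_snd.tendsto _).comp (hcomp t)))
  have hV : ∀ t j, Tendsto (fun n => v t (g (φ n)) j) atTop (𝓝 ((a t).2.2.1 j)) :=
    fun t j => ((continuous_apply j).tendsto _).comp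
      ((continuous_fst.tendsto _).comp ((continuous_snd.tendsto _).comp
        ((continuous_snd.tendsto _).comp (hcomp t))))
  have hW : ∀ t k, Tendsto (fun n => w t (g (φ n)) k) atTop (𝓝 ((a t).2.2.2 k)) :=
    fun t k => ((continuous_apply k).tendsto _).comp
      ((continuous_snd.tendsto _).comp ((continuous_snd.tendsto _).comp
        ((continuous_snd.tendsto _).comp (hcomp t))))
  have key : ∀ i j k, A i j k =
      ∑ t, (a t).1 * ((a t).2.1 i * (a t).2.2.1 j * (a t).2.2.2 k) := by
    intro i j k
    have h1 : Tendsto (fun n => ∑ t, lam t (g (φ n)) *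
        (u t (g (φ n)) i * v t (g (φ n)) j * w t (g (φ n)) k)) atTop (𝓝 (A i j k)) :=
      (hAe i j k).comp (hg.comp hφ.tendsto_atTop)
    have h2 : Tendsto (fun n => ∑ t, lam t (g (φ n)) *
        (u t (g (φ n)) i * v t (g (φ n)) j * w t (g (φ n)) k)) atTop
        (𝓝 (∑ t, (a t).1 * ((a t).2.1 i * (a t).2.2.1 j * (a t).2.2.2 k))) :=
      tendsto_finset_sum _ fun t _ =>
        (hlam t).mul (((hU t i).mul (hV t j)).mul (hW t k))
    exact tendsto_nhds_unique h1 h2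
  have hmemset : r ∈ { r' : ℕ | ∃ (u' : Fin r' → Fin d1 → ℝ) (v' : Fin r' → Fin d2 → ℝ)
      (w' : Fin r' → Fin d3 → ℝ), ∀ i j k, A i j k = ∑ t, u' t i * v' t j * w' t k } := by
    refine ⟨fun t i => (a t).1 * (a t).2.1 i, fun t j => (a t).2.2.1 j,
      fun t k => (a t).2.2.2 k, ?_⟩
    intro i j k
    rw [key i j k]
    exact Finset.sum_congr rfl fun t _ => by ring
  exact Nat.sInf_le hmemset

lemma no_single_unbounded {d1 d2 d3 r : ℕ}
    (A : Fin d1 → Fin d2 → Fin d3 → ℝ)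
    (lam : Fin r → ℕ → ℝ)
    (u : Fin r → ℕ → Fin d1 → ℝ) (v : Fin r → ℕ → Fin d2 → ℝ) (w : Fin r → ℕ → Fin d3 → ℝ)
    (hu : ∀ i n, ∑ x, (u i n x) ^ 2 = 1)
    (hv : ∀ i n, ∑ x, (v i n x) ^ 2 = 1)
    (hw : ∀ i n, ∑ x, (w i n x) ^ 2 = 1)
    (hAe : ∀ i j k, Tendsto (fun n => ∑ t, lam t n * (u t n i * v t n j * w t n k))
      atTop (𝓝 (A i j k)))
    (i0 : Fin r) (g : ℕ → ℕ) (hg : Tendsto g atTop atTop)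
    (hdiv : Tendsto (fun n => |lam i0 (g n)|) atTop atTop)
    (M : ℝ) (hM : ∀ t, t ≠ i0 → ∀ n, |lam t (g n)| ≤ M) : False := by
  set C : ℝ := |M| + 1 with hC
  have hC1 : (1:ℝ) ≤ C := by have := abs_nonneg M; linarith
  have hC0 : (0:ℝ) ≤ C := by linarith
  have hCM : M ≤ C := by have := le_abs_self M; linarith
  set E := Fin r → ℝ × (Fin d1 → ℝ) × (Fin d2 → ℝ) × (Fin d3 → ℝ) with hE
  set lo : E := fun _ => (-C, fun _ => -C, fun _ => -C, fun _ => -C) with hlo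
  set hi : E := fun _ => (C, fun _ => C, fun _ => C, fun _ => C) with hhi
  set x : ℕ → E := fun n t =>
    (if t = i0 then 0 else lam t (g n), u t (g n), v t (g n), w t (g n)) with hx
  have hmem : ∀ n, x n ∈ Set.Icc lo hi := by
    intro n
    constructor <;> intro t <;>
      refine ⟨?_, ?_, ?_, ?_⟩ <;>
        first
        | (intro z
           first
           | (have := abs_le.mp ((abs_le_one_of_sum_sq _ (hu t (g n)) z).trans hC1); simp [hx, hlo, hhi]; linarith [this.1, this.2])
           | (have := abs_le.mp ((abs_le_one_of_sum_sq _ (hv t (g n)) z).trans hC1); simp [hx, hlo, hhi]; linarith [this.1, this.2])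
           | (have := abs_le.mp ((abs_le_one_of_sum_sq _ (hw t (g n)) z).trans hC1); simp [hx, hlo, hhi]; linarith [this.1, this.2]))
        | (by_cases ht : t = i0
           · simp [hx, hlo, hhi, ht]; linarith
           · have := abs_le.mp ((hM t ht n).trans hCM); simp [hx, hlo, hhi, ht]; linarith [this.1, this.2])
  obtain ⟨a, -, φ, hφ, hcv⟩ := isCompact_Icc.tendsto_subseq hmem
  have hcomp : ∀ t, Tendsto (fun n => x (φ n) t) atTop (𝓝 (a t)) :=
    fun t => ((continuous_apply t).tendsto a).comp hcv
  have hlam : ∀ t, t ≠ i0 → Tendsto (fun n => lam t (g (φ n))) atTop (𝓝 (a t).1) := by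
    intro t ht
    have h1 : Tendsto (fun n => (x (φ n) t).1) atTop (𝓝 (a t).1) :=
      (continuous_fst.tendsto _).comp (hcomp t)
    refine h1.congr fun n => ?_
    simp [hx, ht]
  have hU : ∀ t i, Tendsto (fun n => u t (g (φ n)) i) atTop (𝓝 ((a t).2.1 i)) :=
    fun t i => ((continuous_apply i).tendsto _).comp
      ((continuous_fst.tendsto _).comp ((continuous_snd.tendsto _).comp (hcomp t)))
  have hV : ∀ t j, Tendsto (fun n => v t (g (φ n)) j) atTop (𝓝 ((a t).2.2.1 j)) :=
    fun t j => ((continuous_apply j).tendsto _).comp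
      ((continuous_fst.tendsto _).comp ((continuous_snd.tendsto _).comp
        ((continuous_snd.tendsto _).comp (hcomp t))))
  have hW : ∀ t k, Tendsto (fun n => w t (g (φ n)) k) atTop (𝓝 ((a t).2.2.2 k)) :=
    fun t k => ((continuous_apply k).tendsto _).comp
      ((continuous_snd.tendsto _).comp ((continuous_snd.tendsto _).comp
        ((continuous_snd.tendsto _).comp (hcomp t))))
  -- limits of the unit vectors of term i0 are unit vectors
  have unit_limit : ∀ {d : ℕ} (y : ℕ → Fin d → ℝ) (b : Fin d → ℝ),
      (∀ n, ∑ z, y n z ^ 2 = 1) → (∀ z, Tendsto (fun n => y n z) atTop (𝓝 (b z))) →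
      ∃ z, b z ≠ 0 := by
    intro d y b hy hb
    have ha : Tendsto (fun n => ∑ z, y n z ^ 2) atTop (𝓝 (∑ z, b z ^ 2)) :=
      tendsto_finset_sum _ fun z _ => (hb z).pow 2
    have hb1 : Tendsto (fun n => ∑ z, y n z ^ 2) atTop (𝓝 1) := by
      refine Tendsto.congr (fun n => (hy n).symm) tendsto_const_nhds
    have heq : ∑ z, b z ^ 2 = 1 := tendsto_nhds_unique ha hb1
    by_contra h
    push_neg at h
    simp [h] at heq
  obtain ⟨i, hi0U⟩ := unit_limit (fun n => u i0 (g (φ n))) _ (fun n => hu i0 _) (hU i0)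
  obtain ⟨j, hi0V⟩ := unit_limit (fun n => v i0 (g (φ n))) _ (fun n => hv i0 _) (hV i0)
  obtain ⟨k, hi0W⟩ := unit_limit (fun n => w i0 (g (φ n))) _ (fun n => hw i0 _) (hW i0)
  set pstar : ℝ := (a i0).2.1 i * (a i0).2.2.1 j * (a i0).2.2.2 k with hpstar
  have hpne : pstar ≠ 0 := mul_ne_zero (mul_ne_zero hi0U hi0V) hi0W
  have hp : Tendsto (fun n => u i0 (g (φ n)) i * v i0 (g (φ n)) j * w i0 (g (φ n)) k)
      atTop (𝓝 pstar) := ((hU i0 i).mul (hV i0 j)).mul (hW i0 k)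
  set T : ℝ := ∑ t ∈ Finset.univ.erase i0,
    (a t).1 * ((a t).2.1 i * (a t).2.2.1 j * (a t).2.2.2 k) with hT
  have hrest : Tendsto (fun n => ∑ t ∈ Finset.univ.erase i0, lam t (g (φ n)) *
      (u t (g (φ n)) i * v t (g (φ n)) j * w t (g (φ n)) k)) atTop (𝓝 T) :=
    tendsto_finset_sum _ fun t ht =>
      (hlam t (Finset.ne_of_mem_erase ht)).mul (((hU t i).mul (hV t j)).mul (hW t k))
  have hfull : Tendsto (fun n => ∑ t, lam t (g (φ n)) *
      (u t (g (φ n)) i * v t (g (φ n)) j * w t (g (φ n)) k)) atTop (𝓝 (A i j k)) :=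
    (hAe i j k).comp (hg.comp hφ.tendsto_atTop)
  have hq : Tendsto (fun n => lam i0 (g (φ n)) *
      (u i0 (g (φ n)) i * v i0 (g (φ n)) j * w i0 (g (φ n)) k)) atTop (𝓝 (A i j k - T)) := by
    have := hfull.sub hrest
    refine this.congr fun n => ?_
    rw [← Finset.add_sum_erase _ _ (Finset.mem_univ i0)]
    ring
  have hev : ∀ᶠ n in atTop,
      u i0 (g (φ n)) i * v i0 (g (φ n)) j * w i0 (g (φ n)) k ≠ 0 :=
    hp.eventually_ne hpne
  have hlamconv : Tendsto (fun n => lam i0 (g (φ n))) atTop (𝓝 ((A i j k - T) / pstar)) := by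
    have hdivt := hq.div hp hpne
    refine hdivt.congr' (hev.mono fun n hn => ?_)
    rw [Pi.div_apply]; exact mul_div_cancel_right₀ _ hn
  have hd2 : Tendsto (fun n => |lam i0 (g (φ n))|) atTop atTop :=
    hdiv.comp hφ.tendsto_atTop
  exact not_tendsto_atTop_of_tendsto_nhds hlamconv.abs hd2

/-- If rank-≤r tensors `Aₙ = ∑ᵢ λᵢₙ uᵢₙ⊗vᵢₙ⊗wᵢₙ` (with unit vectors) converge to a tensor
of rank ≥ r+1, then `maxᵢ |λᵢₙ| → ∞` and at least two of the coefficient sequences are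
unbounded. -/
theorem diverging_coefficients {d1 d2 d3 r : ℕ}
    (A : Fin d1 → Fin d2 → Fin d3 → ℝ) (hA : r + 1 ≤ tensorRank3 A)
    (lam : Fin r → ℕ → ℝ)
    (u : Fin r → ℕ → Fin d1 → ℝ) (v : Fin r → ℕ → Fin d2 → ℝ) (w : Fin r → ℕ → Fin d3 → ℝ)
    (hu : ∀ i n, ∑ x, (u i n x) ^ 2 = 1)
    (hv : ∀ i n, ∑ x, (v i n x) ^ 2 = 1)
    (hw : ∀ i n, ∑ x, (w i n x) ^ 2 = 1)
    (Aseq : ℕ → Fin d1 → Fin d2 → Fin d3 → ℝ)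
    (hAseq : ∀ n i j k, Aseq n i j k = ∑ t, lam t n * (u t n i * v t n j * w t n k))
    (hconv : Filter.Tendsto (fun n : ℕ => frobNorm3 (fun i j k => Aseq n i j k - A i j k))
      Filter.atTop (nhds 0)) :
    Filter.Tendsto (fun n : ℕ => ⨆ i : Fin r, |lam i n|) Filter.atTop Filter.atTop ∧
    ∃ i j : Fin r, i ≠ j ∧ (¬ ∃ M : ℝ, ∀ n : ℕ, |lam i n| ≤ M) ∧
      (¬ ∃ M : ℝ, ∀ n : ℕ, |lam j n| ≤ M) := by

  -- entrywise convergence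
  have hAe : ∀ i j k, Tendsto (fun n => ∑ t, lam t n * (u t n i * v t n j * w t n k))
      atTop (𝓝 (A i j k)) := by
    intro i j k
    have h0 : Tendsto (fun n => Aseq n i j k - A i j k) atTop (𝓝 0) := by
      refine squeeze_zero_norm (fun n => ?_) hconv
      rw [Real.norm_eq_abs]
      exact entry_le_frob (fun i j k => Aseq n i j k - A i j k) i j k
    have h1 : Tendsto (fun n => Aseq n i j k) atTop (𝓝 (A i j k)) := by
      have := h0.add_const (A i j k)
      simpa using this
    exact h1.congr fun n => hAseq n i j k
  -- the case r = 0 is contradictory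
  rcases Nat.eq_zero_or_pos r with hr | hr
  · exfalso
    subst hr
    have := rank_le_of_bounded A lam u v w hu hv hw hAe id tendsto_id 0
      (fun t => t.elim0)
    omega
  haveI : Nonempty (Fin r) := ⟨⟨0, hr⟩⟩
  -- Part 1
  have part1 : Tendsto (fun n : ℕ => ⨆ i : Fin r, |lam i n|) atTop atTop := by
    by_contra hns
    rw [tendsto_atTop_atTop] at hns
    push_neg at hns
    obtain ⟨b, hb⟩ := hns
    have hfreq : ∃ᶠ n in atTop, (⨆ i : Fin r, |lam i n|) < b := by
      rw [Filter.frequently_atTop]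
      intro N
      obtain ⟨n, hn1, hn2⟩ := hb N
      exact ⟨n, hn1, hn2⟩
    obtain ⟨g, hgmono, hgb⟩ := Filter.extraction_of_frequently_atTop hfreq
    have hM : ∀ t n, |lam t (g n)| ≤ b := by
      intro t n
      refine le_of_lt (lt_of_le_of_lt ?_ (hgb n))
      exact le_ciSup (f := fun i : Fin r => |lam i (g n)|)
        (Set.Finite.bddAbove (Set.finite_range _)) t
    have := rank_le_of_bounded A lam u v w hu hv hw hAe g hgmono.tendsto_atTop b hM
    omega
  refine ⟨part1, ?_⟩
  by_contra hno
  push_neg at hno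
  -- there exists an unbounded index
  have hex : ∃ i0 : Fin r, ¬ ∃ M : ℝ, ∀ n, |lam i0 n| ≤ M := by
    by_contra hall
    push_neg at hall
    choose Mf hMf using hall
    set C : ℝ := ∑ t : Fin r, |Mf t| with hCdef
    have hsup : ∀ n, (⨆ i : Fin r, |lam i n|) ≤ C := by
      intro n
      refine ciSup_le fun t => ?_
      calc |lam t n| ≤ Mf t := hMf t n
        _ ≤ |Mf t| := le_abs_self _
        _ ≤ C := Finset.single_le_sum (f := fun t => |Mf t|)
            (fun _ _ => abs_nonneg _) (Finset.mem_univ t)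
    obtain ⟨n, hn⟩ := (part1.eventually_ge_atTop (C + 1)).exists
    have := hsup n
    linarith
  obtain ⟨i0, hi0⟩ := hex
  -- all other indices are bounded
  have hbd : ∀ t : Fin r, t ≠ i0 → ∃ M : ℝ, ∀ n, |lam t n| ≤ M := by
    intro t ht
    have hi0' : ∀ M : ℝ, ∃ n, M < |lam i0 n| := by
      intro M
      by_contra hc
      push_neg at hc
      exact hi0 ⟨M, hc⟩
    exact hno i0 t (Ne.symm ht) hi0'
  choose Mf hMf using fun t (ht : t ≠ i0) => hbd t ht
  -- build a subsequence along which |lam i0| → ∞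
  have key : ∀ n : ℕ, ∃ m, n ≤ m ∧ (n : ℝ) ≤ |lam i0 m| := by
    intro n
    by_contra h
    push_neg at h
    apply hi0
    refine ⟨(n : ℝ) + ∑ m ∈ Finset.range n, |lam i0 m|, fun m => ?_⟩
    rcases lt_or_ge m n with hm | hm
    · have h1 : |lam i0 m| ≤ ∑ m' ∈ Finset.range n, |lam i0 m'| :=
        Finset.single_le_sum (f := fun m' => |lam i0 m'|)
          (fun _ _ => abs_nonneg _) (Finset.mem_range.mpr hm)
      have : (0:ℝ) ≤ n := Nat.cast_nonneg n
      linarith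
    · have h2 := h m hm
      have h3 : (0:ℝ) ≤ ∑ m' ∈ Finset.range n, |lam i0 m'| :=
        Finset.sum_nonneg fun _ _ => abs_nonneg _
      linarith
  choose g hg1 hg2 using key
  have hgat : Tendsto g atTop atTop := tendsto_atTop_mono hg1 tendsto_id
  have hdiv : Tendsto (fun n => |lam i0 (g n)|) atTop atTop :=
    tendsto_atTop_mono hg2 tendsto_natCast_atTop_atTop
  -- uniform bound for the other coefficients along g
  set MM : ℝ := ∑ t : Fin r, if ht : t = i0 then 0 else |Mf t ht| with hMM
  have hMle : ∀ t, t ≠ i0 → ∀ n, |lam t (g n)| ≤ MM := by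
    intro t ht n
    calc |lam t (g n)| ≤ Mf t ht := hMf t ht (g n)
      _ ≤ |Mf t ht| := le_abs_self _
      _ = if ht' : t = i0 then 0 else |Mf t ht'| := by simp [ht]
      _ ≤ MM := Finset.single_le_sum
          (f := fun t' => if ht' : t' = i0 then 0 else |Mf t' ht'|)
          (fun t' _ => by by_cases h : t' = i0 <;> simp [h, abs_nonneg]) (Finset.mem_univ t)
  exact no_single_unbounded A lam u v w hu hv hw hAe i0 g hgat hdiv MM hMle
end

section
/- For $A = [A_1 \mid A_2] \in \mathbb{R}^{2\times2\times2}$ (two $2\times 2$ slabs), define $\Delta(A) = \left[\tfrac{\det(A_1+A_2)-\det(A_1-A_2)}{2}\right]^2 - 4\det(A_1)\det(A_2)$. Then for any $(L_1, L_2, L_3) \in \mathrm{GL}_2(\mathbb{R})^3$, $\Delta((L_1,L_2,L_3)\cdot A) = \det(L_1)^2 \det(L_2)^2 \det(L_3)^2 \, \Delta(A)$, and $\Delta$ is invariant under any permutation of the three tensor factors. -/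
/-- The slab `A_i` (`i = 0, 1`) of a `2×2×2` tensor, a `2×2` matrix. -/
noncomputable def slab (A : (Fin 3 → Fin 2) → ℝ) (i : Fin 2) : Matrix (Fin 2) (Fin 2) ℝ :=
  Matrix.of fun j k => A ![i, j, k]

/-- Cayley's hyperdeterminant of a `2×2×2` tensor `A = [A₁ | A₂]`:
`Δ(A) = [(det(A₁+A₂) − det(A₁−A₂))/2]² − 4 det(A₁) det(A₂)`. -/
noncomputable def Delta (A : (Fin 3 → Fin 2) → ℝ) : ℝ :=
  ((Matrix.det (slab A 0 + slab A 1) - Matrix.det (slab A 0 - slab A 1)) / 2) ^ 2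
    - 4 * Matrix.det (slab A 0) * Matrix.det (slab A 1)

/-- Multilinear matrix multiplication `(L₁,L₂,L₃) ⋅ A` on `2×2×2` tensors. -/
noncomputable def mmul (L : Fin 3 → Matrix (Fin 2) (Fin 2) ℝ)
    (A : (Fin 3 → Fin 2) → ℝ) : (Fin 3 → Fin 2) → ℝ :=
  fun p => ∑ j : Fin 3 → Fin 2, (∏ i, L i (p i) (j i)) * A j

lemma Delta_eq (A : (Fin 3 → Fin 2) → ℝ) :
    Delta A = ((((A ![0,0,0]+A ![1,0,0])*(A ![0,1,1]+A ![1,1,1]) - (A ![0,0,1]+A ![1,0,1])*(A ![0,1,0]+A ![1,1,0])) - ((A ![0,0,0]-A ![1,0,0])*(A ![0,1,1]-A ![1,1,1]) - (A ![0,0,1]-A ![1,0,1])*(A ![0,1,0]-A ![1,1,0])))/2)^2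
      - 4*(A ![0,0,0]*A ![0,1,1]-A ![0,0,1]*A ![0,1,0])*(A ![1,0,0]*A ![1,1,1]-A ![1,0,1]*A ![1,1,0]) := by
  simp [Delta, slab, Matrix.det_fin_two, Matrix.add_apply, Matrix.sub_apply]

def e3 : (Fin 2 × Fin 2 × Fin 2) ≃ (Fin 3 → Fin 2) where
  toFun x := ![x.1, x.2.1, x.2.2]
  invFun f := (f 0, f 1, f 2)
  left_inv x := rfl
  right_inv f := by funext i; fin_cases i <;> rfl

lemma mmul_apply (L : Fin 3 → Matrix (Fin 2) (Fin 2) ℝ) (A : (Fin 3 → Fin 2) → ℝ)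
    (p : Fin 3 → Fin 2) :
    mmul L A p =
      L 0 (p 0) 0 * L 1 (p 1) 0 * L 2 (p 2) 0 * A ![0,0,0]
      + L 0 (p 0) 0 * L 1 (p 1) 0 * L 2 (p 2) 1 * A ![0,0,1]
      + L 0 (p 0) 0 * L 1 (p 1) 1 * L 2 (p 2) 0 * A ![0,1,0]
      + L 0 (p 0) 0 * L 1 (p 1) 1 * L 2 (p 2) 1 * A ![0,1,1]
      + L 0 (p 0) 1 * L 1 (p 1) 0 * L 2 (p 2) 0 * A ![1,0,0]
      + L 0 (p 0) 1 * L 1 (p 1) 0 * L 2 (p 2) 1 * A ![1,0,1]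
      + L 0 (p 0) 1 * L 1 (p 1) 1 * L 2 (p 2) 0 * A ![1,1,0]
      + L 0 (p 0) 1 * L 1 (p 1) 1 * L 2 (p 2) 1 * A ![1,1,1] := by
  rw [mmul, ← Equiv.sum_comp e3]
  have he : ∀ x, e3 x = ![x.1, x.2.1, x.2.2] := fun _ => rfl
  simp [he, Fintype.sum_prod_type, Fin.sum_univ_two, Fin.prod_univ_three]
  ring

lemma mmul_comp (L : Fin 3 → Matrix (Fin 2) (Fin 2) ℝ) (A : (Fin 3 → Fin 2) → ℝ) :
    mmul L A = mmul ![L 0, 1, 1] (mmul ![1, L 1, 1] (mmul ![1, 1, L 2] A)) := by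
  funext p
  have h : ∀ x y z : Fin 2, mmul L A ![x, y, z] =
      mmul ![L 0, 1, 1] (mmul ![1, L 1, 1] (mmul ![1, 1, L 2] A)) ![x, y, z] := by
    intro x y z
    fin_cases x <;> fin_cases y <;> fin_cases z <;>
      · simp only [mmul_apply, Matrix.cons_val_zero, Matrix.cons_val_one, Matrix.head_cons, Matrix.cons_val_two, Matrix.tail_cons,
          Matrix.one_apply]
        norm_num
        ring
  have hp : ![p 0, p 1, p 2] = p := funext fun i => by fin_cases i <;> rfl
  have := h (p 0) (p 1) (p 2)
  rwa [hp] at this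

lemma s0 (M : Matrix (Fin 2) (Fin 2) ℝ) (A : (Fin 3 → Fin 2) → ℝ) :
    Delta (mmul ![M, 1, 1] A) = M.det ^ 2 * Delta A := by
  rw [Delta_eq (mmul _ A), Delta_eq A]
  simp only [mmul_apply, Matrix.cons_val_zero, Matrix.cons_val_one, Matrix.head_cons, Matrix.cons_val_two, Matrix.tail_cons,
    Matrix.one_apply, Matrix.det_fin_two]
  norm_num
  ring

lemma s1 (M : Matrix (Fin 2) (Fin 2) ℝ) (A : (Fin 3 → Fin 2) → ℝ) :
    Delta (mmul ![1, M, 1] A) = M.det ^ 2 * Delta A := by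
  rw [Delta_eq (mmul _ A), Delta_eq A]
  simp only [mmul_apply, Matrix.cons_val_zero, Matrix.cons_val_one, Matrix.head_cons, Matrix.cons_val_two, Matrix.tail_cons,
    Matrix.one_apply, Matrix.det_fin_two]
  norm_num
  ring

lemma s2 (M : Matrix (Fin 2) (Fin 2) ℝ) (A : (Fin 3 → Fin 2) → ℝ) :
    Delta (mmul ![1, 1, M] A) = M.det ^ 2 * Delta A := by
  rw [Delta_eq (mmul _ A), Delta_eq A]
  simp only [mmul_apply, Matrix.cons_val_zero, Matrix.cons_val_one, Matrix.head_cons, Matrix.cons_val_two, Matrix.tail_cons,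
    Matrix.one_apply, Matrix.det_fin_two]
  norm_num
  ring

lemma scaling (L : Fin 3 → Matrix (Fin 2) (Fin 2) ℝ) (A : (Fin 3 → Fin 2) → ℝ) :
    Delta (mmul L A) = (L 0).det ^ 2 * (L 1).det ^ 2 * (L 2).det ^ 2 * Delta A := by
  rw [mmul_comp, s0, s1, s2]; ring

lemma perm_inv (σ : Equiv.Perm (Fin 3)) (A : (Fin 3 → Fin 2) → ℝ) :
    Delta (fun j => A (j ∘ σ)) = Delta A := by
  have h : ∀ v : Fin 3 → Fin 2, v ∘ ⇑σ = ![v (σ 0), v (σ 1), v (σ 2)] :=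
    fun v => funext fun i => by fin_cases i <;> rfl
  rw [Delta_eq (fun j => A (j ∘ σ)), Delta_eq A]
  simp only [h]
  have h01 : σ 0 ≠ σ 1 := σ.injective.ne (by decide)
  have h02 : σ 0 ≠ σ 2 := σ.injective.ne (by decide)
  have h12 : σ 1 ≠ σ 2 := σ.injective.ne (by decide)
  clear h
  generalize σ 0 = a at *
  generalize σ 1 = b at *
  generalize σ 2 = c at *
  revert h01 h02 h12
  fin_cases a <;> fin_cases b <;> fin_cases c <;>
    · norm_num [Fin.ext_iff, Matrix.cons_val_zero, Matrix.cons_val_two, Matrix.tail_cons,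
        Matrix.cons_val_one, Matrix.head_cons]
      try ring

/-- Under `(L₁,L₂,L₃) ∈ GL₂(ℝ)³` the hyperdeterminant rescales by
`det(L₁)² det(L₂)² det(L₃)²`, and `Δ` is invariant under permutations of the three
tensor factors. -/
theorem Delta_mmul_and_perm_invariant :
    (∀ (L : Fin 3 → Matrix (Fin 2) (Fin 2) ℝ), (∀ i, IsUnit (L i).det) →
      ∀ A : (Fin 3 → Fin 2) → ℝ,
        Delta (mmul L A) =
          (L 0).det ^ 2 * (L 1).det ^ 2 * (L 2).det ^ 2 * Delta A) ∧
    (∀ (σ : Equiv.Perm (Fin 3)) (A : (Fin 3 → Fin 2) → ℝ),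
        Delta (fun j => A (j ∘ σ)) = Delta A) := by
  exact ⟨fun L _ A => scaling L A, perm_inv⟩
end

section
/- Let $U_i \leq V_i$ be subspaces of finite-dimensional real inner-product spaces, $i=1,\dots,k$. If $B, B' \in U_1 \otimes \dots \otimes U_k$ lie in the same $\mathrm{GL}(V_1)\times\dots\times\mathrm{GL}(V_k)$-orbit of $V_1 \otimes \dots \otimes V_k$, then they lie in the same $\mathrm{GL}(U_1)\times\dots\times\mathrm{GL}(U_k)$-orbit of $U_1 \otimes \dots \otimes U_k$. The same holds with orthogonal groups $O(U_i)$, $O(V_i)$ in place of general linear groups. -/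
open scoped TensorProduct
open PiTensorProduct Module

namespace OrbitInj




variable {E : Type*} [AddCommGroup E] [Module ℝ E]

/-- A complement of `W` can be chosen containing any `X` with `X ⊓ W = ⊥`. -/
theorem exists_isCompl_le (W X : Submodule ℝ E) (h : X ⊓ W = ⊥) :
    ∃ Wc : Submodule ℝ E, IsCompl W Wc ∧ X ≤ Wc := by
  obtain ⟨D, hD⟩ := Submodule.exists_isCompl (W ⊔ X)
  refine ⟨X ⊔ D, ⟨?_, ?_⟩, le_sup_left⟩
  · rw [disjoint_iff]
    ext x
    simp only [Submodule.mem_inf, Submodule.mem_bot]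
    constructor
    · rintro ⟨hxW, hxXD⟩
      obtain ⟨a, ha, d, hd, rfl⟩ := Submodule.mem_sup.1 hxXD
      have hdmem : d ∈ (W ⊔ X) ⊓ D := by
        refine ⟨?_, hd⟩
        have hdad : d = (a + d) - a := by abel
        rw [hdad]
        exact Submodule.sub_mem _ (Submodule.mem_sup_left hxW) (Submodule.mem_sup_right ha)
      rw [disjoint_iff.1 hD.disjoint] at hdmem
      simp only [Submodule.mem_bot] at hdmem
      subst hdmem
      have : a ∈ X ⊓ W := ⟨ha, by simpa using hxW⟩
      rw [h] at this
      simpa using this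
    · rintro rfl; exact ⟨Submodule.zero_mem _, Submodule.zero_mem _⟩
  · rw [codisjoint_iff]
    have h2 := codisjoint_iff.1 hD.codisjoint
    rw [← sup_assoc]
    exact h2

/-- There is a subspace `A ≤ W'` with `A ⊓ W = ⊥` and `(W ⊓ W') ⊔ A = W'`. -/
theorem exists_compl_inside (W W' : Submodule ℝ E) :
    ∃ A : Submodule ℝ E, A ≤ W' ∧ A ⊓ W = ⊥ ∧ (W ⊓ W') ⊔ A = W' := by
  obtain ⟨c, hc⟩ := Submodule.exists_isCompl ((W ⊓ W').comap W'.subtype)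
  refine ⟨c.map W'.subtype, ?_, ?_, ?_⟩
  · rintro x ⟨y, -, rfl⟩; exact y.2
  · rw [eq_bot_iff]
    rintro x ⟨⟨y, hy, rfl⟩, hxW⟩
    have : y ∈ ((W ⊓ W').comap W'.subtype) ⊓ c := ⟨⟨hxW, y.2⟩, hy⟩
    rw [disjoint_iff.1 hc.disjoint] at this
    simp only [Submodule.mem_bot] at this
    simp [this]
  · have h1 : ((W ⊓ W').comap W'.subtype ⊔ c).map W'.subtype = (⊤ : Submodule ℝ W').map W'.subtype := by
      rw [codisjoint_iff.1 hc.codisjoint]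
    rw [Submodule.map_sup, Submodule.map_comap_subtype, Submodule.map_top,
      Submodule.range_subtype] at h1
    rwa [show W' ⊓ (W ⊓ W') = W ⊓ W' from inf_eq_right.2 inf_le_right] at h1







/-- Any two finite-dimensional real inner product spaces of equal dimension
are isometrically isomorphic. -/
noncomputable def isometryOfFinrankEq {A B : Type*} [NormedAddCommGroup A]
    [InnerProductSpace ℝ A] [NormedAddCommGroup B] [InnerProductSpace ℝ B]
    [FiniteDimensional ℝ A] [FiniteDimensional ℝ B]
    (h : finrank ℝ A = finrank ℝ B) : A ≃ₗᵢ[ℝ] B :=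
  (stdOrthonormalBasis ℝ A).repr.trans
    (((stdOrthonormalBasis ℝ B).reindex (finCongr h.symm)).repr.symm)

/-- Extend a linear equivalence between submodules to an automorphism. -/
theorem exists_extend_linear {E : Type*} [AddCommGroup E] [Module ℝ E]
    [FiniteDimensional ℝ E] (p q : Submodule ℝ E) (φ : p ≃ₗ[ℝ] q) :
    ∃ g : E ≃ₗ[ℝ] E, ∀ x : p, g x = (φ x : E) := by
  obtain ⟨pc, hpc⟩ := p.exists_isCompl
  obtain ⟨qc, hqc⟩ := q.exists_isCompl
  have h1 := Submodule.finrank_add_eq_of_isCompl hpc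
  have h2 := Submodule.finrank_add_eq_of_isCompl hqc
  have h3 : finrank ℝ p = finrank ℝ q := φ.finrank_eq
  have hrank : finrank ℝ pc = finrank ℝ qc := by omega
  obtain ⟨ψ⟩ := FiniteDimensional.nonempty_linearEquiv_of_finrank_eq hrank
  refine ⟨(Submodule.prodEquivOfIsCompl p pc hpc).symm.trans
      ((φ.prodCongr ψ).trans (Submodule.prodEquivOfIsCompl q qc hqc)), ?_⟩
  intro x
  have h0 : (Submodule.prodEquivOfIsCompl p pc hpc).symm (x : E) = (x, 0) :=
    Submodule.prodEquivOfIsCompl_symm_apply_left _ _ hpc x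
  simp [LinearEquiv.trans_apply, h0, Submodule.coe_prodEquivOfIsCompl']

/-- Extend a linear isometry equivalence between submodules to an isometric automorphism. -/
theorem exists_extend_isometry {E : Type*} [NormedAddCommGroup E] [InnerProductSpace ℝ E]
    [FiniteDimensional ℝ E] (p q : Submodule ℝ E) (φ : p ≃ₗᵢ[ℝ] q) :
    ∃ g : E ≃ₗᵢ[ℝ] E, ∀ x : p, g x = (φ x : E) := by
  have hpc : IsCompl p pᗮ := Submodule.isCompl_orthogonal_of_hasOrthogonalProjection
  have hqc : IsCompl q qᗮ := Submodule.isCompl_orthogonal_of_hasOrthogonalProjection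
  have h1 := Submodule.finrank_add_finrank_orthogonal (K := p)
  have h2 := Submodule.finrank_add_finrank_orthogonal (K := q)
  have h3 : finrank ℝ p = finrank ℝ q := φ.toLinearEquiv.finrank_eq
  have hrank : finrank ℝ pᗮ = finrank ℝ qᗮ := by omega
  let ψ : pᗮ ≃ₗᵢ[ℝ] qᗮ := isometryOfFinrankEq hrank
  let g₀ : E ≃ₗ[ℝ] E := (Submodule.prodEquivOfIsCompl p pᗮ hpc).symm.trans
      ((φ.toLinearEquiv.prodCongr ψ.toLinearEquiv).trans (Submodule.prodEquivOfIsCompl q qᗮ hqc))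
  have hg₀p : ∀ x : p, g₀ x = (φ x : E) := by
    intro x
    have h0 : (Submodule.prodEquivOfIsCompl p pᗮ hpc).symm (x : E) = (x, 0) :=
      Submodule.prodEquivOfIsCompl_symm_apply_left _ _ hpc x
    simp [g₀, LinearEquiv.trans_apply, h0, Submodule.coe_prodEquivOfIsCompl']
  have hnorm : ∀ x : E, ‖g₀ x‖ = ‖x‖ := by
    intro x
    set z := (Submodule.prodEquivOfIsCompl p pᗮ hpc).symm x with hz
    have hx : x = (z.1 : E) + (z.2 : E) := by
      have := (Submodule.prodEquivOfIsCompl p pᗮ hpc).apply_symm_apply x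
      rw [← this, Submodule.coe_prodEquivOfIsCompl']
    have hgx : g₀ x = ((φ z.1 : E) + (ψ z.2 : E)) := by
      simp [g₀, LinearEquiv.trans_apply, ← hz, Submodule.coe_prodEquivOfIsCompl']
    have horth1 : (inner ℝ ((z.1 : E)) ((z.2 : E)) : ℝ) = 0 :=
      (Submodule.mem_orthogonal _ _).1 z.2.2 _ z.1.2
    have horth2 : (inner ℝ ((φ z.1 : E)) ((ψ z.2 : E)) : ℝ) = 0 :=
      (Submodule.mem_orthogonal _ _).1 (ψ z.2).2 _ (φ z.1).2
    have hsq : ‖g₀ x‖ ^ 2 = ‖x‖ ^ 2 := by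
      rw [hgx]
      conv_rhs => rw [hx]
      rw [norm_add_sq_real, norm_add_sq_real, horth1, horth2]
      have e1 : ‖(φ z.1 : E)‖ = ‖(z.1 : E)‖ := by
        rw [← Submodule.coe_norm, ← Submodule.coe_norm, φ.norm_map]
      have e2 : ‖(ψ z.2 : E)‖ = ‖(z.2 : E)‖ := by
        rw [← Submodule.coe_norm, ← Submodule.coe_norm, ψ.norm_map]
      rw [e1, e2]
    have := congrArg Real.sqrt hsq
    rwa [Real.sqrt_sq (norm_nonneg _), Real.sqrt_sq (norm_nonneg _)] at this
  exact ⟨⟨g₀, hnorm⟩, hg₀p⟩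







variable {k : ℕ}

section Supp
variable {V : Fin k → Type*} [∀ i, AddCommGroup (V i)] [∀ i, Module ℝ (V i)]

/-- `T` is supported in `W` at coordinate `i`. -/
def suppIn (i : Fin k) (W : Submodule ℝ (V i)) (T : ⨂[ℝ] j, V j) : Prop :=
  T ∈ Submodule.span ℝ {x | ∃ v : (j : Fin k) → V j, v i ∈ W ∧ x = tprod ℝ v}

theorem suppIn_top (i : Fin k) (T : ⨂[ℝ] j, V j) : suppIn i ⊤ T := by
  have hT : T ∈ Submodule.span ℝ (Set.range (tprod ℝ (s := V))) := by
    rw [span_tprod_eq_top]; trivial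
  refine Submodule.span_mono ?_ hT
  rintro x ⟨v, rfl⟩
  exact ⟨v, trivial, rfl⟩

theorem suppIn_mono {i : Fin k} {W W' : Submodule ℝ (V i)} (h : W ≤ W')
    {T : ⨂[ℝ] j, V j} (hT : suppIn i W T) : suppIn i W' T := by
  refine Submodule.span_mono ?_ hT
  rintro x ⟨v, hv, rfl⟩
  exact ⟨v, h hv, rfl⟩

theorem suppIn_map {V' : Fin k → Type*} [∀ i, AddCommGroup (V' i)] [∀ i, Module ℝ (V' i)]
    (F : (j : Fin k) → V j →ₗ[ℝ] V' j) {i : Fin k} {W : Submodule ℝ (V i)}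
    {T : ⨂[ℝ] j, V j} (hT : suppIn i W T) :
    suppIn i (W.map (F i)) (PiTensorProduct.map F T) := by
  have h1 : PiTensorProduct.map F T ∈
      (Submodule.span ℝ {x | ∃ v : (j : Fin k) → V j, v i ∈ W ∧ x = tprod ℝ v}).map
        (PiTensorProduct.map F) := Submodule.mem_map_of_mem hT
  rw [Submodule.map_span] at h1
  refine Submodule.span_mono ?_ h1
  rintro x ⟨y, ⟨v, hv, rfl⟩, rfl⟩
  exact ⟨fun j => F j (v j), ⟨v i, hv, rfl⟩, by simp [PiTensorProduct.map_tprod]⟩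

/-- If two families of maps agree off `i` and agree on a subspace supporting `T` at `i`,
then the induced maps agree at `T`. -/
theorem map_eq_of_agree_single {V' : Fin k → Type*} [∀ i, AddCommGroup (V' i)]
    [∀ i, Module ℝ (V' i)] (F G : (j : Fin k) → V j →ₗ[ℝ] V' j) (i : Fin k)
    {W : Submodule ℝ (V i)} (hFG : ∀ j, j ≠ i → F j = G j)
    (hi : ∀ x ∈ W, F i x = G i x) {T : ⨂[ℝ] j, V j} (hT : suppIn i W T) :
    PiTensorProduct.map F T = PiTensorProduct.map G T := by
  have hspan : Submodule.span ℝ {x | ∃ v : (j : Fin k) → V j, v i ∈ W ∧ x = tprod ℝ v}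
      ≤ LinearMap.eqLocus (PiTensorProduct.map F) (PiTensorProduct.map G) := by
    rw [Submodule.span_le]
    rintro x ⟨v, hv, rfl⟩
    show PiTensorProduct.map F (tprod ℝ v) = PiTensorProduct.map G (tprod ℝ v)
    rw [PiTensorProduct.map_tprod, PiTensorProduct.map_tprod]
    congr 1
    funext j
    by_cases hj : j = i
    · subst hj; exact hi _ hv
    · rw [hFG j hj]
  exact hspan hT

theorem suppIn_of_map_update_eq (i : Fin k) (P : V i →ₗ[ℝ] V i) (W : Submodule ℝ (V i))
    (hrange : ∀ x, P x ∈ W) {T : ⨂[ℝ] j, V j}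
    (h : PiTensorProduct.map (Function.update (fun j => (LinearMap.id : V j →ₗ[ℝ] V j)) i P) T
      = T) : suppIn i W T := by
  have h2 : suppIn i ((⊤ : Submodule ℝ (V i)).map
      ((Function.update (fun j => (LinearMap.id : V j →ₗ[ℝ] V j)) i P) i)) T := by
    conv_rhs => rw [← h]
    exact suppIn_map _ (suppIn_top i T)
  rw [Function.update_self] at h2
  refine suppIn_mono ?_ h2
  rintro x ⟨y, -, rfl⟩
  exact hrange y

theorem map_update_eq_self {i : Fin k} {P : V i →ₗ[ℝ] V i} {W : Submodule ℝ (V i)}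
    (hP : ∀ x ∈ W, P x = x) {T : ⨂[ℝ] j, V j} (hT : suppIn i W T) :
    PiTensorProduct.map (Function.update (fun j => (LinearMap.id : V j →ₗ[ℝ] V j)) i P) T
      = T := by
  have := map_eq_of_agree_single (Function.update (fun j => (LinearMap.id : V j →ₗ[ℝ] V j)) i P)
      (fun j => LinearMap.id) i (fun j hj => Function.update_of_ne hj _ _)
      (fun x hx => by rw [Function.update_self]; exact hP x hx) hT
  rw [this, PiTensorProduct.map_id, LinearMap.id_apply]

end Supp



section Supp2
variable {V : Fin k → Type*} [∀ i, AddCommGroup (V i)] [∀ i, Module ℝ (V i)]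

theorem suppIn_inf {i : Fin k} {W W' : Submodule ℝ (V i)} {T : ⨂[ℝ] j, V j}
    (h : suppIn i W T) (h' : suppIn i W' T) : suppIn i (W ⊓ W') T := by
  obtain ⟨A, hAW', hAW, hsup⟩ := exists_compl_inside W W'
  obtain ⟨Wc, hcompl, hAWc⟩ := exists_isCompl_le W A hAW
  set P : V i →ₗ[ℝ] V i := W.subtype ∘ₗ (W.projectionOnto Wc hcompl) with hP
  have hPid : ∀ x ∈ W, P x = x := by
    intro x hx
    have := Submodule.linearProjOfIsCompl_apply_left hcompl ⟨x, hx⟩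
    simp [hP, this]
  have hPA : ∀ x ∈ A, P x = 0 := by
    intro x hx
    have := Submodule.linearProjOfIsCompl_apply_right hcompl ⟨x, hAWc hx⟩
    simp [hP, this]
  have hmap := map_update_eq_self hPid h
  have h2 := suppIn_map (Function.update (fun j => (LinearMap.id : V j →ₗ[ℝ] V j)) i P) h'
  rw [hmap, Function.update_self] at h2
  refine suppIn_mono ?_ h2
  rintro x ⟨y, hy, rfl⟩
  have hy2 : y ∈ (W ⊓ W') ⊔ A := by rw [hsup]; exact hy
  obtain ⟨c, hc, a, ha, rfl⟩ := Submodule.mem_sup.1 hy2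
  have hPca : P (c + a) = c := by rw [map_add, hPid c hc.1, hPA a ha, add_zero]
  rw [hPca]
  exact hc

theorem exists_minSupp [∀ j, FiniteDimensional ℝ (V j)] (i : Fin k) (T : ⨂[ℝ] j, V j) :
    ∃ S : Submodule ℝ (V i), suppIn i S T ∧ ∀ W, suppIn i W T → S ≤ W := by
  set N := {n : ℕ | ∃ W : Submodule ℝ (V i), suppIn i W T ∧ finrank ℝ W = n} with hN
  have hne : sInf N ∈ N := Nat.sInf_mem ⟨finrank ℝ (⊤ : Submodule ℝ (V i)), ⊤, suppIn_top i T, rfl⟩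
  obtain ⟨W₀, hW₀, hrank⟩ := hne
  refine ⟨W₀, hW₀, fun W hW => ?_⟩
  have hinf : suppIn i (W₀ ⊓ W) T := suppIn_inf hW₀ hW
  have hle : sInf N ≤ finrank ℝ ↥(W₀ ⊓ W) := Nat.sInf_le ⟨W₀ ⊓ W, hinf, rfl⟩
  have h2 : finrank ℝ W₀ ≤ finrank ℝ ↥(W₀ ⊓ W) := by omega
  have := Submodule.eq_of_le_of_finrank_le (inf_le_left : W₀ ⊓ W ≤ W₀) h2
  exact inf_eq_left.1 this

theorem map_eq_of_agree {V' : Fin k → Type*} [∀ i, AddCommGroup (V' i)] [∀ i, Module ℝ (V' i)]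
    (F G : (j : Fin k) → V j →ₗ[ℝ] V' j) (s : (j : Fin k) → Submodule ℝ (V j))
    {T : ⨂[ℝ] j, V j} (hs : ∀ j, suppIn j (s j) T)
    (hagree : ∀ j, ∀ x ∈ s j, F j x = G j x) :
    PiTensorProduct.map F T = PiTensorProduct.map G T := by
  suffices H : ∀ t : Finset (Fin k), ∀ F : (j : Fin k) → V j →ₗ[ℝ] V' j,
      (∀ j, j ∉ t → F j = G j) → (∀ j, ∀ x ∈ s j, F j x = G j x) →
      PiTensorProduct.map F T = PiTensorProduct.map G T by
    exact H Finset.univ F (fun j hj => absurd (Finset.mem_univ j) hj) hagree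
  intro t
  induction t using Finset.induction_on with
  | empty =>
    intro F hF _
    have : F = G := funext fun j => hF j (by simp)
    rw [this]
  | @insert a t ha ih =>
    intro F hF hFs
    have step := map_eq_of_agree_single F (Function.update F a (G a)) a
        (fun j hj => (Function.update_of_ne hj _ _).symm)
        (fun x hx => by rw [Function.update_self]; exact hFs a x hx) (hs a)
    rw [step]
    refine ih (Function.update F a (G a)) ?_ ?_
    · intro j hj
      by_cases hja : j = a
      · subst hja; rw [Function.update_self]
      · rw [Function.update_of_ne hja]
        exact hF j (by simp [Finset.mem_insert, hja, hj])
    · intro j x hx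
      by_cases hja : j = a
      · subst hja; rw [Function.update_self]
      · rw [Function.update_of_ne hja]; exact hFs j x hx

end Supp2

section Main

variable {V : Fin k → Type*} [∀ i, NormedAddCommGroup (V i)]
    [∀ i, InnerProductSpace ℝ (V i)] [∀ i, FiniteDimensional ℝ (V i)]
    {U : (i : Fin k) → Submodule ℝ (V i)}

theorem map_retract (T : ⨂[ℝ] i, ↥(U i)) :
    PiTensorProduct.map (fun i => ((Submodule.orthogonalProjectionOnto (U i)).toLinearMap))
      (PiTensorProduct.map (fun i => (U i).subtype) T) = T := by
  have h1 : (fun i => ((Submodule.orthogonalProjectionOnto (U i)).toLinearMap) ∘ₗ (U i).subtype)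
      = fun i => (LinearMap.id : ↥(U i) →ₗ[ℝ] ↥(U i)) := by
    funext i
    ext x
    simp [Submodule.orthogonalProjectionOnto_mem_subspace_eq_self]
  have h2 : PiTensorProduct.map
      (fun i => ((Submodule.orthogonalProjectionOnto (U i)).toLinearMap) ∘ₗ (U i).subtype) T = T := by
    rw [h1, PiTensorProduct.map_id]
    rfl
  rwa [PiTensorProduct.map_comp, LinearMap.comp_apply] at h2

theorem iota_injective : Function.Injective
    (PiTensorProduct.map (fun i => (U i).subtype) :
      (⨂[ℝ] i, ↥(U i)) →ₗ[ℝ] ⨂[ℝ] i, V i) :=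
  Function.LeftInverse.injective (g := PiTensorProduct.map
    (fun i => ((Submodule.orthogonalProjectionOnto (U i)).toLinearMap))) map_retract

theorem cancel_equiv (Le : (i : Fin k) → V i ≃ₗ[ℝ] V i) (X : ⨂[ℝ] i, V i) :
    PiTensorProduct.map (fun i => (Le i).symm.toLinearMap)
      (PiTensorProduct.map (fun i => (Le i).toLinearMap) X) = X := by
  have h1 : (fun i => (Le i).symm.toLinearMap ∘ₗ (Le i).toLinearMap)
      = fun i => (LinearMap.id : V i →ₗ[ℝ] V i) := by
    funext i; ext x; simp
  have h2 : PiTensorProduct.map (fun i => (Le i).symm.toLinearMap ∘ₗ (Le i).toLinearMap) X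
      = X := by
    rw [h1, PiTensorProduct.map_id]; rfl
  rwa [PiTensorProduct.map_comp, LinearMap.comp_apply] at h2

theorem map_map_symm {W : Type*} [AddCommGroup W] [Module ℝ W] (e : W ≃ₗ[ℝ] W)
    (X : Submodule ℝ W) : (X.map e.toLinearMap).map e.symm.toLinearMap = X := by
  rw [← Submodule.map_comp]
  have : e.symm.toLinearMap ∘ₗ e.toLinearMap = LinearMap.id := by ext x; simp
  rw [this, Submodule.map_id]

theorem subtype_proj_map (i : Fin k) (X : Submodule ℝ (V i)) (hX : X ≤ U i) :
    (X.map ((Submodule.orthogonalProjectionOnto (U i)).toLinearMap)).map (U i).subtype = X := by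
  ext x
  simp only [Submodule.mem_map]
  constructor
  · rintro ⟨y, ⟨z, hz, rfl⟩, rfl⟩
    have hz2 : (Submodule.orthogonalProjectionOnto (U i)) z = ⟨z, hX hz⟩ :=
      Submodule.orthogonalProjectionOnto_mem_subspace_eq_self ⟨z, hX hz⟩
    simpa [hz2] using hz
  · intro hx
    refine ⟨⟨x, hX hx⟩, ⟨x, hx, ?_⟩, rfl⟩
    exact Submodule.orthogonalProjectionOnto_mem_subspace_eq_self (⟨x, hX hx⟩ : U i)

theorem main_key (B B' : ⨂[ℝ] i, ↥(U i)) (Le : (i : Fin k) → V i ≃ₗ[ℝ] V i)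
    (hL : PiTensorProduct.map (fun i => (Le i).toLinearMap)
        (PiTensorProduct.map (fun i => (U i).subtype) B)
      = PiTensorProduct.map (fun i => (U i).subtype) B') :
    ∃ (s s' : (i : Fin k) → Submodule ℝ ↥(U i))
      (φ : (i : Fin k) → ↥(s i) ≃ₗ[ℝ] ↥(s' i)),
      (∀ i, suppIn i (s i) B) ∧
      (∀ i (x : ↥(s i)), ((φ i x : ↥(U i)) : V i) = Le i ((x : ↥(U i)) : V i)) := by
  classical
  obtain ⟨s, hs, hsmin⟩ : ∃ s : (i : Fin k) → Submodule ℝ ↥(U i),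
      (∀ i, suppIn i (s i) B) ∧ (∀ i W, suppIn i W B → s i ≤ W) := by
    choose s h1 h2 using fun i => exists_minSupp (V := fun j => ↥(U j)) i B
    exact ⟨s, h1, h2⟩
  obtain ⟨s', hs', hs'min⟩ : ∃ s' : (i : Fin k) → Submodule ℝ ↥(U i),
      (∀ i, suppIn i (s' i) B') ∧ (∀ i W, suppIn i W B' → s' i ≤ W) := by
    choose s h1 h2 using fun i => exists_minSupp (V := fun j => ↥(U j)) i B'
    exact ⟨s, h1, h2⟩
  have key : ∀ i, ((s i).map (U i).subtype).map (Le i).toLinearMap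
      = (s' i).map (U i).subtype := by
    intro i
    obtain ⟨t', ht'supp, ht'min⟩ := exists_minSupp (V := V) i
      (PiTensorProduct.map (fun j => (U j).subtype) B')
    set S := (s i).map (U i).subtype with hS
    set S' := (s' i).map (U i).subtype with hS'
    have hSB : suppIn i S (PiTensorProduct.map (fun j => (U j).subtype) B) :=
      suppIn_map (fun j => (U j).subtype) (hs i)
    have hLS : suppIn i (S.map (Le i).toLinearMap)
        (PiTensorProduct.map (fun j => (U j).subtype) B') := by
      have := suppIn_map (fun j => (Le j).toLinearMap) hSB
      rwa [hL] at this
    have ht'U : t' ≤ U i := by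
      refine ht'min (U i) ?_
      have := suppIn_map (fun j => (U j).subtype) (suppIn_top i B')
      rwa [Submodule.map_top, Submodule.range_subtype] at this
    have ht'le : t' ≤ S.map (Le i).toLinearMap := ht'min _ hLS
    have hS'supp : suppIn i S' (PiTensorProduct.map (fun j => (U j).subtype) B') :=
      suppIn_map (fun j => (U j).subtype) (hs' i)
    have ht'S' : t' ≤ S' := ht'min _ hS'supp
    have hs'le : s' i ≤ t'.map ((Submodule.orthogonalProjectionOnto (U i)).toLinearMap) := by
      refine hs'min i _ ?_
      have := suppIn_map (fun j => ((Submodule.orthogonalProjectionOnto (U j)).toLinearMap)) ht'supp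
      rwa [map_retract B'] at this
    have hS't' : S' ≤ t' := by
      calc S' ≤ (t'.map ((Submodule.orthogonalProjectionOnto (U i)).toLinearMap)).map (U i).subtype :=
            Submodule.map_mono hs'le
        _ = t' := subtype_proj_map i t' ht'U
    have hrev : suppIn i (t'.map (Le i).symm.toLinearMap)
        (PiTensorProduct.map (fun j => (U j).subtype) B) := by
      have h0 := suppIn_map (fun j => (Le j).symm.toLinearMap) ht'supp
      rw [← hL] at h0
      rwa [cancel_equiv] at h0
    have hSU : S ≤ U i := by rintro x ⟨y, -, rfl⟩; exact y.2
    have htLeU : t'.map (Le i).symm.toLinearMap ≤ U i := by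
      calc t'.map (Le i).symm.toLinearMap
          ≤ (S.map (Le i).toLinearMap).map (Le i).symm.toLinearMap := Submodule.map_mono ht'le
        _ = S := map_map_symm (Le i) S
        _ ≤ U i := hSU
    have hsle : s i ≤ ((t'.map (Le i).symm.toLinearMap).map
        ((Submodule.orthogonalProjectionOnto (U i)).toLinearMap)) := by
      refine hsmin i _ ?_
      have := suppIn_map (fun j => ((Submodule.orthogonalProjectionOnto (U j)).toLinearMap)) hrev
      rwa [map_retract B] at this
    have hSle : S ≤ t'.map (Le i).symm.toLinearMap := by
      calc S ≤ ((t'.map (Le i).symm.toLinearMap).map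
            ((Submodule.orthogonalProjectionOnto (U i)).toLinearMap)).map (U i).subtype :=
            Submodule.map_mono hsle
        _ = t'.map (Le i).symm.toLinearMap := subtype_proj_map i _ htLeU
    have hfin : S.map (Le i).toLinearMap ≤ t' := by
      have h1 : (t'.map (Le i).symm.toLinearMap).map (Le i).toLinearMap = t' := by
        have := map_map_symm (Le i).symm t'
        rwa [LinearEquiv.symm_symm] at this
      calc S.map (Le i).toLinearMap
          ≤ (t'.map (Le i).symm.toLinearMap).map (Le i).toLinearMap := Submodule.map_mono hSle
        _ = t' := h1
    have : S.map (Le i).toLinearMap = t' := le_antisymm hfin ht'le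
    rw [this]
    exact le_antisymm ht'S' hS't'
  refine ⟨s, s', ?_, hs, ?_⟩
  · intro i
    exact (Submodule.equivMapOfInjective (U i).subtype (Submodule.injective_subtype _)
        (s i)).trans ((((Le i).submoduleMap ((s i).map (U i).subtype)).trans
      (LinearEquiv.ofEq _ _ (key i))).trans
      (Submodule.equivMapOfInjective (U i).subtype (Submodule.injective_subtype _) (s' i)).symm)
  · intro i x
    have h4 : ∀ y : ↥((s' i).map (U i).subtype),
        ((((Submodule.equivMapOfInjective (U i).subtype (Submodule.injective_subtype _)
          (s' i)).symm y : ↥(s' i)) : ↥(U i)) : V i) = (y : V i) := by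
      intro y
      have h5 := Submodule.coe_equivMapOfInjective_apply (U i).subtype
        (Submodule.injective_subtype _) (s' i)
        ((Submodule.equivMapOfInjective (U i).subtype (Submodule.injective_subtype _)
          (s' i)).symm y)
      rw [LinearEquiv.apply_symm_apply] at h5
      exact h5.symm
    simp only [LinearEquiv.trans_apply]
    rw [h4]
    rw [LinearEquiv.coe_ofEq_apply]
    rw [LinearEquiv.submoduleMap_apply]
    rw [Submodule.coe_equivMapOfInjective_apply]
    rfl

theorem final_GL (B B' : ⨂[ℝ] i, ↥(U i)) (Le : (i : Fin k) → V i ≃ₗ[ℝ] V i)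
    (hL : PiTensorProduct.map (fun i => (Le i).toLinearMap)
        (PiTensorProduct.map (fun i => (U i).subtype) B)
      = PiTensorProduct.map (fun i => (U i).subtype) B') :
    ∃ M : (i : Fin k) → ↥(U i) ≃ₗ[ℝ] ↥(U i),
      PiTensorProduct.map (fun i => (M i).toLinearMap) B = B' := by
  obtain ⟨s, s', φ, hsupp, hφ⟩ := main_key B B' Le hL
  have hM : ∀ i, ∃ g : ↥(U i) ≃ₗ[ℝ] ↥(U i), ∀ x : ↥(s i), g x = ((φ i x : ↥(U i))) :=
    fun i => exists_extend_linear (s i) (s' i) (φ i)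
  choose M hMx using hM
  refine ⟨M, iota_injective ?_⟩
  have h1 : PiTensorProduct.map (fun i => (U i).subtype ∘ₗ (M i).toLinearMap) B
      = PiTensorProduct.map (fun i => (U i).subtype)
        (PiTensorProduct.map (fun i => (M i).toLinearMap) B) := by
    rw [PiTensorProduct.map_comp]; rfl
  have h2 : PiTensorProduct.map (fun i => (Le i).toLinearMap ∘ₗ (U i).subtype) B
      = PiTensorProduct.map (fun i => (U i).subtype) B' := by
    rw [PiTensorProduct.map_comp, LinearMap.comp_apply, hL]
  rw [← h1, ← h2]
  refine map_eq_of_agree _ _ s hsupp ?_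
  intro j x hx
  simp only [LinearMap.comp_apply]
  show (U j).subtype (M j x) = (Le j) ((U j).subtype x)
  rw [show (M j) x = ((φ j ⟨x, hx⟩ : ↥(U j))) from hMx j ⟨x, hx⟩]
  exact hφ j ⟨x, hx⟩

theorem final_O (B B' : ⨂[ℝ] i, ↥(U i)) (L : (i : Fin k) → V i ≃ₗᵢ[ℝ] V i)
    (hL : PiTensorProduct.map (fun i => (L i).toLinearEquiv.toLinearMap)
        (PiTensorProduct.map (fun i => (U i).subtype) B)
      = PiTensorProduct.map (fun i => (U i).subtype) B') :
    ∃ M : (i : Fin k) → ↥(U i) ≃ₗᵢ[ℝ] ↥(U i),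
      PiTensorProduct.map (fun i => (M i).toLinearEquiv.toLinearMap) B = B' := by
  obtain ⟨s, s', φ, hsupp, hφ⟩ := main_key B B' (fun i => (L i).toLinearEquiv) hL
  have hψnorm : ∀ i (x : ↥(s i)), ‖φ i x‖ = ‖x‖ := by
    intro i x
    have h1 : ‖φ i x‖ = ‖((φ i x : ↥(U i)) : V i)‖ := rfl
    have h2 : ‖x‖ = ‖((x : ↥(U i)) : V i)‖ := rfl
    rw [h1, h2, hφ i x]
    exact (L i).norm_map _
  let ψ : (i : Fin k) → ↥(s i) ≃ₗᵢ[ℝ] ↥(s' i) := fun i => ⟨φ i, hψnorm i⟩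
  have hM : ∀ i, ∃ g : ↥(U i) ≃ₗᵢ[ℝ] ↥(U i), ∀ x : ↥(s i), g x = ((ψ i x : ↥(U i))) :=
    fun i => exists_extend_isometry (s i) (s' i) (ψ i)
  choose M hMx using hM
  refine ⟨M, iota_injective ?_⟩
  have h1 : PiTensorProduct.map
      (fun i => (U i).subtype ∘ₗ (M i).toLinearEquiv.toLinearMap) B
      = PiTensorProduct.map (fun i => (U i).subtype)
        (PiTensorProduct.map (fun i => (M i).toLinearEquiv.toLinearMap) B) := by
    rw [PiTensorProduct.map_comp]; rfl
  have h2 : PiTensorProduct.map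
      (fun i => (L i).toLinearEquiv.toLinearMap ∘ₗ (U i).subtype) B
      = PiTensorProduct.map (fun i => (U i).subtype) B' := by
    rw [PiTensorProduct.map_comp, LinearMap.comp_apply, hL]
  rw [← h1, ← h2]
  refine map_eq_of_agree _ _ s hsupp ?_
  intro j x hx
  simp only [LinearMap.comp_apply]
  show (U j).subtype (M j x) = (L j) ((U j).subtype x)
  rw [show (M j) x = ((ψ j ⟨x, hx⟩ : ↥(U j))) from hMx j ⟨x, hx⟩]
  exact hφ j ⟨x, hx⟩

end Main

end OrbitInj

/-- Injectivity of orbits: if two tensors in `U₁ ⊗ ⋯ ⊗ U_k` are in the same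
`GL(V₁)×⋯×GL(V_k)`-orbit of `V₁ ⊗ ⋯ ⊗ V_k`, then they are in the same
`GL(U₁)×⋯×GL(U_k)`-orbit of `U₁ ⊗ ⋯ ⊗ U_k`; similarly for orthogonal groups. -/
theorem orbit_injectivity {k : ℕ} (V : Fin k → Type)
    [∀ i, NormedAddCommGroup (V i)] [∀ i, InnerProductSpace ℝ (V i)]
    [∀ i, FiniteDimensional ℝ (V i)]
    (U : (i : Fin k) → Submodule ℝ (V i))
    (B B' : ⨂[ℝ] i, ↥(U i)) :
    ((∃ L : (i : Fin k) → V i ≃ₗ[ℝ] V i,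
        PiTensorProduct.map (fun i => (L i).toLinearMap)
            (PiTensorProduct.map (fun i => (U i).subtype) B)
          = PiTensorProduct.map (fun i => (U i).subtype) B') →
      ∃ M : (i : Fin k) → ↥(U i) ≃ₗ[ℝ] ↥(U i),
        PiTensorProduct.map (fun i => (M i).toLinearMap) B = B') ∧
    ((∃ L : (i : Fin k) → V i ≃ₗᵢ[ℝ] V i,
        PiTensorProduct.map (fun i => (L i).toLinearEquiv.toLinearMap)
            (PiTensorProduct.map (fun i => (U i).subtype) B)
          = PiTensorProduct.map (fun i => (U i).subtype) B') →
      ∃ M : (i : Fin k) → ↥(U i) ≃ₗᵢ[ℝ] ↥(U i),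
        PiTensorProduct.map (fun i => (M i).toLinearEquiv.toLinearMap) B = B') := by
  constructor
  · rintro ⟨L, hL⟩
    exact OrbitInj.final_GL B B' L hL
  · rintro ⟨L, hL⟩
    exact OrbitInj.final_O B B' L hL
end
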